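/- arXiv:1510.08969 — 4 statements merged into one kernel-verified Lean document; each statement's English description precedes it below -/
import Mathlib

section
/- Let X be a compact metric space and A ⊆ X a nonempty closed subset containing all isolated points of X. Then for any D, D' ∈ D_{X,A}, the spaces I(X,A;D) and I(X,A;D') are homeomorphic. -/
open Topology

/-- The canonical copy `X × {0}` of `X` inside `X × ℝ`. -/
def xzero (X : Type*) : Set (X × ℝ) := Set.univ ×ˢ ({0} : Set ℝ)

/-- The collection `D_{X,A}`: nonempty sets `D ⊆ X × (0,1]` all of whose points are isolated
in the subspace `X×{0} ∪ D` and with `cl(D) − D = A × {0}`. -/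
def Dcoll (X : Type*) [TopologicalSpace X] (A : Set X) : Set (Set (X × ℝ)) :=
  {D | D.Nonempty ∧ (∀ p ∈ D, p.2 ∈ Set.Ioc (0 : ℝ) 1) ∧
    (∀ p ∈ D, 𝓝[(xzero X ∪ D) \ {p}] p = ⊥) ∧
    closure D \ D = A ×ˢ ({0} : Set ℝ)}

/-- The space `I(X,A;D) = X×{0} ∪ D`. -/
def ISp (X : Type*) [TopologicalSpace X] (D : Set (X × ℝ)) : Set (X × ℝ) := xzero X ∪ D

set_option linter.unusedSectionVars false
set_option linter.unusedVariables false

open Metric Set Filter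

section Aux
variable {Y : Type*} [MetricSpace Y]

/-- Points of `D'` accumulate at every point of `closure D' \ D'`. -/
lemma aux_infinite_near {D' : Set Y} {a : Y} (ha : a ∈ closure D' \ D') {ε : ℝ} (hε : 0 < ε) :
    {q | q ∈ D' ∧ dist q a < ε}.Infinite := by
  by_contra hfin
  rw [Set.not_infinite] at hfin
  set F := {q | q ∈ D' ∧ dist q a < ε} with hF
  have hFD : F ⊆ D' := fun q hq => hq.1
  have hsplit : D' = F ∪ (D' \ F) := by
    rw [Set.union_diff_cancel' (le_refl F) hFD]
  have hacl : a ∈ closure F ∪ closure (D' \ F) := by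
    rw [← closure_union, ← hsplit]; exact ha.1
  have haF : a ∉ F := fun h => ha.2 (hFD h)
  have hC : IsClosed {y : Y | ε ≤ dist y a} :=
    isClosed_le continuous_const (continuous_id.dist continuous_const)
  rcases hacl with h | h
  · rw [hfin.isClosed.closure_eq] at h; exact haF h
  · have hsub : D' \ F ⊆ {y : Y | ε ≤ dist y a} := by
      rintro q ⟨hq, hqF⟩
      by_contra hlt
      exact hqF ⟨hq, lt_of_not_ge hlt⟩
    have := hC.closure_subset_iff.mpr hsub h
    simp only [Set.mem_setOf_eq, dist_self] at this
    linarith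

/-- Only finitely many points of `D` are at distance `≥ ε` from `L = closure D \ D`,
given all points of `D` are isolated in a compact set `K ⊇ D`. -/
lemma aux_finite_far {D K L : Set Y} (hK : IsCompact K) (hDK : D ⊆ K)
    (hiso : ∀ p ∈ D, 𝓝[K \ {p}] p = ⊥) (hL : closure D \ D = L) (hLne : L.Nonempty)
    {ε : ℝ} (hε : 0 < ε) : {p | p ∈ D ∧ ε ≤ infDist p L}.Finite := by
  by_contra hinf
  replace hinf : {p | p ∈ D ∧ ε ≤ infDist p L}.Infinite := hinf
  set S := {p | p ∈ D ∧ ε ≤ infDist p L} with hS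
  have hSD : S ⊆ D := fun p hp => hp.1
  obtain ⟨x, hxK, hacc⟩ := hinf.exists_accPt_of_subset_isCompact hK (hSD.trans hDK)
  have hxcl : x ∈ closure S := mem_closure_iff_clusterPt.mpr hacc.clusterPt
  have hCclosed : IsClosed {y : Y | ε ≤ infDist y L} :=
    isClosed_le continuous_const (continuous_infDist_pt L)
  by_cases hxD : x ∈ D
  · -- x isolated in K, contradiction with accumulation
    have h1 : 𝓝[≠] x ⊓ 𝓟 S ≤ 𝓝[K \ {x}] x := by
      calc 𝓝[≠] x ⊓ 𝓟 S = 𝓝 x ⊓ 𝓟 ({x}ᶜ ∩ S) := by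
              rw [nhdsWithin, inf_assoc, inf_principal]
        _ ≤ 𝓝 x ⊓ 𝓟 (K \ {x}) := by
              refine inf_le_inf_left _ (principal_mono.mpr ?_)
              rintro q ⟨hq1, hq2⟩
              exact ⟨hDK (hSD hq2), hq1⟩
        _ = 𝓝[K \ {x}] x := rfl
    rw [hiso x hxD] at h1
    rw [le_bot_iff] at h1
    exact hacc.ne h1
  · have hxL : x ∈ L := by
      rw [← hL]
      refine ⟨?_, hxD⟩
      exact closure_mono hSD hxcl
    have hge : ε ≤ infDist x L := by
      have : closure S ⊆ {y : Y | ε ≤ infDist y L} :=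
        hCclosed.closure_subset_iff.mpr (fun p hp => hp.2)
      exact this hxcl
    rw [infDist_zero_of_mem hxL] at hge
    linarith

noncomputable def bfδ (k : ℕ) : ℝ := 1 / ((k : ℝ) + 1)

lemma bfδ_pos (k : ℕ) : 0 < bfδ k := by unfold bfδ; positivity

/-- The displacement bound certificate for a matched pair. -/
def bfBnd (L : Set Y) (e e' : ℕ → Y) (pq : Y × Y) : Prop :=
  (∃ k : ℕ, pq.1 = e k ∧ dist pq.1 pq.2 ≤ infDist pq.1 L + bfδ k) ∨
  (∃ k : ℕ, pq.2 = e' k ∧ dist pq.1 pq.2 ≤ infDist pq.2 L + bfδ k)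

open Classical in
/-- Even step: match `e k` to a fresh point of `D'`. -/
noncomputable def stepEven (L D' : Set Y) (e : ℕ → Y) (k : ℕ) (S : Set (Y × Y)) : Set (Y × Y) :=
  if ∃ q, (e k, q) ∈ S then S
  else if h : ∃ q, q ∈ D' ∧ q ∉ Prod.snd '' S ∧
      dist (e k) q ≤ infDist (e k) L + bfδ k then
    insert (e k, h.choose) S
  else S

open Classical in
/-- Odd step: match `e' k` to a fresh point of `D`. -/
noncomputable def stepOdd (L D : Set Y) (e' : ℕ → Y) (k : ℕ) (S : Set (Y × Y)) : Set (Y × Y) :=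
  if ∃ p, (p, e' k) ∈ S then S
  else if h : ∃ p, p ∈ D ∧ p ∉ Prod.fst '' S ∧
      dist p (e' k) ≤ infDist (e' k) L + bfδ k then
    insert (h.choose, e' k) S
  else S

open Classical in
/-- The increasing sequence of finite partial matchings. -/
noncomputable def bfF (L D D' : Set Y) (e e' : ℕ → Y) : ℕ → Set (Y × Y)
  | 0 => ∅
  | n + 1 =>
    if n % 2 = 0 then stepEven L D' e (n / 2) (bfF L D D' e e' n)
    else stepOdd L D e' (n / 2) (bfF L D D' e e' n)

/-- Invariant for the partial matchings. -/
def bfInv (L D D' : Set Y) (e e' : ℕ → Y) (S : Set (Y × Y)) : Prop :=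
  S.Finite ∧ (∀ pq ∈ S, pq.1 ∈ D ∧ pq.2 ∈ D') ∧
  (∀ pq ∈ S, ∀ pq' ∈ S, pq.1 = pq'.1 → pq = pq') ∧
  (∀ pq ∈ S, ∀ pq' ∈ S, pq.2 = pq'.2 → pq = pq') ∧
  (∀ pq ∈ S, bfBnd L e e' pq)

lemma stepEven_subset (L D' : Set Y) (e : ℕ → Y) (k : ℕ) (S : Set (Y × Y)) :
    S ⊆ stepEven L D' e k S := by
  unfold stepEven
  split_ifs <;> first | exact subset_rfl | exact Set.subset_insert _ _

lemma stepOdd_subset (L D : Set Y) (e' : ℕ → Y) (k : ℕ) (S : Set (Y × Y)) :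
    S ⊆ stepOdd L D e' k S := by
  unfold stepOdd
  split_ifs <;> first | exact subset_rfl | exact Set.subset_insert _ _

lemma bfF_succ (L D D' : Set Y) (e e' : ℕ → Y) (n : ℕ) :
    bfF L D D' e e' (n + 1) = if n % 2 = 0 then stepEven L D' e (n / 2) (bfF L D D' e e' n)
      else stepOdd L D e' (n / 2) (bfF L D D' e e' n) := rfl

lemma bfF_mono {L D D' : Set Y} {e e' : ℕ → Y} {m n : ℕ} (h : m ≤ n) :
    bfF L D D' e e' m ⊆ bfF L D D' e e' n := by
  induction n with
  | zero => rw [Nat.le_zero.mp h]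
  | succ n ih =>
    rcases Nat.lt_or_ge m (n + 1) with h' | h'
    · refine (ih (Nat.lt_succ_iff.mp h')).trans ?_
      rw [bfF_succ]
      split_ifs
      · exact stepEven_subset _ _ _ _ _
      · exact stepOdd_subset _ _ _ _ _
    · rw [Nat.le_antisymm h h']

lemma stepEven_inv {L D D' : Set Y} {e e' : ℕ → Y}
    (heD : ∀ k, e k ∈ D) {k : ℕ} {S : Set (Y × Y)}
    (hS : bfInv L D D' e e' S) : bfInv L D D' e e' (stepEven L D' e k S) := by
  obtain ⟨hfin, hmem, hinj1, hinj2, hbnd⟩ := hS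
  unfold stepEven
  split_ifs with h1 h2
  · exact ⟨hfin, hmem, hinj1, hinj2, hbnd⟩
  · obtain ⟨hq1, hq2, hq3⟩ := h2.choose_spec
    set q := h2.choose
    set p := e k with hp
    refine ⟨hfin.insert _, ?_, ?_, ?_, ?_⟩
    · rintro pq (rfl | hpq)
      · exact ⟨heD _, hq1⟩
      · exact hmem pq hpq
    · rintro pq (rfl | hpq) pq' (rfl | hpq') hfst
      · rfl
      · refine absurd ⟨pq'.2, ?_⟩ h1
        have hfst' : p = pq'.1 := hfst
        rw [hfst', Prod.mk.eta]; exact hpq'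
      · refine absurd ⟨pq.2, ?_⟩ h1
        have hfst' : p = pq.1 := hfst.symm
        rw [hfst', Prod.mk.eta]; exact hpq
      · exact hinj1 pq hpq pq' hpq' hfst
    · rintro pq (rfl | hpq) pq' (rfl | hpq') hsnd
      · rfl
      · exact absurd ⟨pq', hpq', hsnd.symm⟩ hq2
      · exact absurd ⟨pq, hpq, hsnd⟩ hq2
      · exact hinj2 pq hpq pq' hpq' hsnd
    · rintro pq (rfl | hpq)
      · exact Or.inl ⟨k, rfl, hq3⟩
      · exact hbnd pq hpq
  · exact ⟨hfin, hmem, hinj1, hinj2, hbnd⟩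

lemma stepOdd_inv {L D D' : Set Y} {e e' : ℕ → Y}
    (he'D' : ∀ k, e' k ∈ D') {k : ℕ} {S : Set (Y × Y)}
    (hS : bfInv L D D' e e' S) : bfInv L D D' e e' (stepOdd L D e' k S) := by
  obtain ⟨hfin, hmem, hinj1, hinj2, hbnd⟩ := hS
  unfold stepOdd
  split_ifs with h1 h2
  · exact ⟨hfin, hmem, hinj1, hinj2, hbnd⟩
  · obtain ⟨hp1, hp2, hp3⟩ := h2.choose_spec
    set p := h2.choose
    set q := e' k with hq
    refine ⟨hfin.insert _, ?_, ?_, ?_, ?_⟩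
    · rintro pq (rfl | hpq)
      · exact ⟨hp1, he'D' _⟩
      · exact hmem pq hpq
    · rintro pq (rfl | hpq) pq' (rfl | hpq') hfst
      · rfl
      · exact absurd ⟨pq', hpq', hfst.symm⟩ hp2
      · exact absurd ⟨pq, hpq, hfst⟩ hp2
      · exact hinj1 pq hpq pq' hpq' hfst
    · rintro pq (rfl | hpq) pq' (rfl | hpq') hsnd
      · rfl
      · refine absurd ⟨pq'.1, ?_⟩ h1
        have hsnd' : q = pq'.2 := hsnd
        rw [hsnd', Prod.mk.eta]; exact hpq'
      · refine absurd ⟨pq.1, ?_⟩ h1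
        have hsnd' : q = pq.2 := hsnd.symm
        rw [hsnd', Prod.mk.eta]; exact hpq
      · exact hinj2 pq hpq pq' hpq' hsnd
    · rintro pq (rfl | hpq)
      · exact Or.inr ⟨k, rfl, hp3⟩
      · exact hbnd pq hpq
  · exact ⟨hfin, hmem, hinj1, hinj2, hbnd⟩

section bf
variable {L D D' : Set Y} {e e' : ℕ → Y}
  (hLc : IsCompact L) (hLne : L.Nonempty)
  (hLD : L ⊆ closure D \ D) (hLD' : L ⊆ closure D' \ D')
  (heD : ∀ k, e k ∈ D) (he'D' : ∀ k, e' k ∈ D')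
  (heS : ∀ p ∈ D, ∃ k, e k = p) (he'S : ∀ q ∈ D', ∃ k, e' k = q)

include hLc hLne in
/-- Existence of a fresh nearby point of a set `E` accumulating on all of `L`. -/
lemma aux_exists_near {E : Set Y} (hLE : L ⊆ closure E \ E) (p : Y) {δ : ℝ} (hδ : 0 < δ)
    {T : Set Y} (hT : T.Finite) :
    ∃ q, q ∈ E ∧ q ∉ T ∧ dist p q ≤ infDist p L + δ := by
  obtain ⟨a, haL, hda⟩ := hLc.exists_infDist_eq_dist hLne p
  have hinf := aux_infinite_near (hLE haL) hδ
  obtain ⟨q, ⟨⟨hqE, hqd⟩, hqT⟩⟩ := (hinf.diff hT).nonempty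
  refine ⟨q, hqE, hqT, ?_⟩
  calc dist p q ≤ dist p a + dist a q := dist_triangle _ _ _
    _ ≤ infDist p L + δ := by rw [← hda, dist_comm a q]; linarith

include heD he'D' in
lemma bfF_inv (n : ℕ) : bfInv L D D' e e' (bfF L D D' e e' n) := by
  induction n with
  | zero => refine ⟨?_, ?_, ?_, ?_, ?_⟩ <;> simp [bfF]
  | succ n ih =>
    rw [bfF_succ]
    split_ifs
    · exact stepEven_inv heD ih
    · exact stepOdd_inv he'D' ih

include hLc hLne hLD' heD he'D' in
lemma bfF_cover_fst (k : ℕ) : ∃ q, (e k, q) ∈ bfF L D D' e e' (2 * k + 1) := by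
  have hinv := bfF_inv (L := L) heD he'D' (2 * k)
  have hstep : bfF L D D' e e' (2 * k + 1)
      = stepEven L D' e k (bfF L D D' e e' (2 * k)) := by
    rw [bfF_succ, if_pos (show (2 * k) % 2 = 0 by omega), show (2 * k) / 2 = k by omega]
  rw [hstep]
  set S := bfF L D D' e e' (2 * k)
  unfold stepEven
  by_cases hg : ∃ q, (e k, q) ∈ S
  · rw [if_pos hg]; exact hg
  · rw [if_neg hg]
    have hex : ∃ q, q ∈ D' ∧ q ∉ Prod.snd '' S ∧
        dist (e k) q ≤ infDist (e k) L + bfδ k :=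
      aux_exists_near hLc hLne hLD' (e k) (bfδ_pos k) (hinv.1.image _)
    rw [dif_pos hex]
    exact ⟨hex.choose, Set.mem_insert _ _⟩

include hLc hLne hLD heD he'D' in
lemma bfF_cover_snd (k : ℕ) : ∃ p, (p, e' k) ∈ bfF L D D' e e' (2 * k + 2) := by
  have hinv := bfF_inv (L := L) heD he'D' (2 * k + 1)
  have hstep : bfF L D D' e e' (2 * k + 2)
      = stepOdd L D e' k (bfF L D D' e e' (2 * k + 1)) := by
    rw [bfF_succ, if_neg (show ¬(2 * k + 1) % 2 = 0 by omega), show (2 * k + 1) / 2 = k by omega]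
  rw [hstep]
  set S := bfF L D D' e e' (2 * k + 1)
  unfold stepOdd
  by_cases hg : ∃ p, (p, e' k) ∈ S
  · rw [if_pos hg]; exact hg
  · rw [if_neg hg]
    have hex : ∃ p, p ∈ D ∧ p ∉ Prod.fst '' S ∧
        dist p (e' k) ≤ infDist (e' k) L + bfδ k := by
      obtain ⟨p, hp1, hp2, hp3⟩ :=
        aux_exists_near hLc hLne hLD (e' k) (bfδ_pos k) (hinv.1.image Prod.fst)
      exact ⟨p, hp1, hp2, by rw [dist_comm]; exact hp3⟩
    rw [dif_pos hex]
    exact ⟨hex.choose, Set.mem_insert _ _⟩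

end bf

/-- The total matching. -/
noncomputable def bfM (L D D' : Set Y) (e e' : ℕ → Y) : Set (Y × Y) := ⋃ n, bfF L D D' e e' n

section bfM
variable {L D D' : Set Y} {e e' : ℕ → Y}
  (hLc : IsCompact L) (hLne : L.Nonempty)
  (hLD : L ⊆ closure D \ D) (hLD' : L ⊆ closure D' \ D')
  (heD : ∀ k, e k ∈ D) (he'D' : ∀ k, e' k ∈ D')
  (heS : ∀ p ∈ D, ∃ k, e k = p) (he'S : ∀ q ∈ D', ∃ k, e' k = q)

include heD he'D' in
lemma bfM_mem {pq : Y × Y} (h : pq ∈ bfM L D D' e e') : pq.1 ∈ D ∧ pq.2 ∈ D' := by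
  obtain ⟨n, hn⟩ := Set.mem_iUnion.mp h
  exact (bfF_inv (L := L) heD he'D' n).2.1 pq hn

include heD he'D' in
lemma bfM_inj1 {pq pq' : Y × Y} (h : pq ∈ bfM L D D' e e') (h' : pq' ∈ bfM L D D' e e')
    (hf : pq.1 = pq'.1) : pq = pq' := by
  obtain ⟨n, hn⟩ := Set.mem_iUnion.mp h
  obtain ⟨m, hm⟩ := Set.mem_iUnion.mp h'
  exact (bfF_inv (L := L) heD he'D' (max n m)).2.2.1 pq (bfF_mono (le_max_left n m) hn) pq'
    (bfF_mono (le_max_right n m) hm) hf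

include heD he'D' in
lemma bfM_inj2 {pq pq' : Y × Y} (h : pq ∈ bfM L D D' e e') (h' : pq' ∈ bfM L D D' e e')
    (hf : pq.2 = pq'.2) : pq = pq' := by
  obtain ⟨n, hn⟩ := Set.mem_iUnion.mp h
  obtain ⟨m, hm⟩ := Set.mem_iUnion.mp h'
  exact (bfF_inv (L := L) heD he'D' (max n m)).2.2.2.1 pq (bfF_mono (le_max_left n m) hn) pq'
    (bfF_mono (le_max_right n m) hm) hf

include heD he'D' in
lemma bfM_bnd {pq : Y × Y} (h : pq ∈ bfM L D D' e e') : bfBnd L e e' pq := by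
  obtain ⟨n, hn⟩ := Set.mem_iUnion.mp h
  exact (bfF_inv (L := L) heD he'D' n).2.2.2.2 pq hn

include hLc hLne hLD' heD he'D' heS in
lemma bfM_total {p : Y} (hp : p ∈ D) : ∃ q, (p, q) ∈ bfM L D D' e e' := by
  obtain ⟨k, rfl⟩ := heS p hp
  obtain ⟨q, hq⟩ := bfF_cover_fst hLc hLne hLD' heD he'D' k
  exact ⟨q, Set.mem_iUnion.mpr ⟨2 * k + 1, hq⟩⟩

include hLc hLne hLD heD he'D' he'S in
lemma bfM_surj {q : Y} (hq : q ∈ D') : ∃ p, (p, q) ∈ bfM L D D' e e' := by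
  obtain ⟨k, rfl⟩ := he'S q hq
  obtain ⟨p, hp⟩ := bfF_cover_snd hLc hLne hLD heD he'D' k
  exact ⟨p, Set.mem_iUnion.mpr ⟨2 * k + 2, hp⟩⟩

lemma bfδk_finite {ε : ℝ} (hε : 0 < ε) : {k : ℕ | ε ≤ 1 / ((k : ℝ) + 1)}.Finite := by
  refine Set.Finite.subset (Set.finite_Iic ⌈1 / ε⌉₊) ?_
  intro k hk
  simp only [Set.mem_setOf_eq] at hk
  have hk1 : (0 : ℝ) < (k : ℝ) + 1 := by positivity
  have h2 : (k : ℝ) + 1 ≤ 1 / ε := by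
    rw [le_div_iff₀ hε]
    calc ((k : ℝ) + 1) * ε ≤ ((k : ℝ) + 1) * (1 / ((k : ℝ) + 1)) := by
          apply mul_le_mul_of_nonneg_left hk (by positivity)
      _ = 1 := by field_simp
  have h3 : (k : ℝ) ≤ 1 / ε := by linarith
  have := (Nat.le_ceil (1 / ε))
  simp only [Set.mem_Iic]
  exact_mod_cast Nat.cast_le.mp (h3.trans this) |>.trans (le_refl _)

include heD he'D' in
lemma bfM_far_finite {ε : ℝ} (hε : 0 < ε)
    (hfarD : {p | p ∈ D ∧ ε / 2 ≤ infDist p L}.Finite)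
    (hfarD' : {q | q ∈ D' ∧ ε / 2 ≤ infDist q L}.Finite) :
    {pq | pq ∈ bfM L D D' e e' ∧ ε ≤ dist pq.1 pq.2}.Finite := by
  have hδfin : {k : ℕ | ε / 2 ≤ bfδ k}.Finite := bfδk_finite (by linarith)
  set S₁ : Set Y := (e '' {k | ε / 2 ≤ bfδ k}) ∪ {p | p ∈ D ∧ ε / 2 ≤ infDist p L} with hS₁
  set S₂ : Set Y := (e' '' {k | ε / 2 ≤ bfδ k}) ∪ {q | q ∈ D' ∧ ε / 2 ≤ infDist q L} with hS₂
  have hS₁fin : S₁.Finite := (hδfin.image e).union hfarD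
  have hS₂fin : S₂.Finite := (hδfin.image e').union hfarD'
  have hT₁ : {pq | pq ∈ bfM L D D' e e' ∧ pq.1 ∈ S₁}.Finite := by
    apply Set.Finite.of_finite_image (f := Prod.fst)
    · exact hS₁fin.subset (by rintro _ ⟨pq, ⟨_, h2⟩, rfl⟩; exact h2)
    · intro pq hpq pq' hpq' hf
      exact bfM_inj1 heD he'D' hpq.1 hpq'.1 hf
  have hT₂ : {pq | pq ∈ bfM L D D' e e' ∧ pq.2 ∈ S₂}.Finite := by
    apply Set.Finite.of_finite_image (f := Prod.snd)
    · exact hS₂fin.subset (by rintro _ ⟨pq, ⟨_, h2⟩, rfl⟩; exact h2)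
    · intro pq hpq pq' hpq' hf
      exact bfM_inj2 heD he'D' hpq.1 hpq'.1 hf
  refine (hT₁.union hT₂).subset ?_
  rintro pq ⟨hM, hdist⟩
  rcases bfM_bnd heD he'D' hM with ⟨k, hk1, hk2⟩ | ⟨k, hk1, hk2⟩
  · left
    refine ⟨hM, ?_⟩
    by_cases hδ : ε / 2 ≤ bfδ k
    · exact Or.inl ⟨k, hδ, hk1.symm⟩
    · push_neg at hδ
      refine Or.inr ⟨(bfM_mem heD he'D' hM).1, ?_⟩
      linarith
  · right
    refine ⟨hM, ?_⟩
    by_cases hδ : ε / 2 ≤ bfδ k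
    · exact Or.inl ⟨k, hδ, hk1.symm⟩
    · push_neg at hδ
      refine Or.inr ⟨(bfM_mem heD he'D' hM).2, ?_⟩
      linarith

end bfM

open Classical in
noncomputable def matchFun (M : Set (Y × Y)) (p : Y) : Y :=
  if h : ∃ q, (p, q) ∈ M then h.choose else p

open Classical in
noncomputable def matchInv (M : Set (Y × Y)) (q : Y) : Y :=
  if h : ∃ p, (p, q) ∈ M then h.choose else q

lemma matchFun_mem {M : Set (Y × Y)} {p : Y} (h : ∃ q, (p, q) ∈ M) : (p, matchFun M p) ∈ M := by
  unfold matchFun; rw [dif_pos h]; exact h.choose_spec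

lemma matchInv_mem {M : Set (Y × Y)} {q : Y} (h : ∃ p, (p, q) ∈ M) : (matchInv M q, q) ∈ M := by
  unfold matchInv; rw [dif_pos h]; exact h.choose_spec

end Aux

section main
variable {X : Type} [MetricSpace X] [CompactSpace X]

/-- Basic facts about a member of `Dcoll`. -/
lemma Dcoll_facts {A : Set X} (hAne : A.Nonempty) {D : Set (X × ℝ)} (hD : D ∈ Dcoll X A) :
    IsCompact (ISp X D) ∧ (A ×ˢ ({0} : Set ℝ) ⊆ closure D \ D) ∧
    (∀ p ∈ xzero X, p ∉ D) ∧ D.Countable ∧ D.Infinite := by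
  obtain ⟨hDne, hDIoc, hDiso, hDcl⟩ := hD
  have hLsub : A ×ˢ ({0} : Set ℝ) ⊆ xzero X := fun p hp => ⟨mem_univ _, hp.2⟩
  have hclD : closure D ⊆ ISp X D := by
    intro p hp
    by_cases h : p ∈ D
    · exact Or.inr h
    · exact Or.inl (hLsub (hDcl ▸ ⟨hp, h⟩))
  have hDsub : D ⊆ Set.univ ×ˢ Set.Icc (0 : ℝ) 1 :=
    fun p hp => ⟨mem_univ _, Set.Ioc_subset_Icc_self (hDIoc p hp)⟩
  have hclDc : IsCompact (closure D) :=
    IsCompact.of_isClosed_subset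
      (isCompact_univ.prod (isCompact_Icc : IsCompact (Set.Icc (0 : ℝ) 1)))
      isClosed_closure
      (closure_minimal hDsub (isClosed_univ.prod isClosed_Icc))
  have hISp_eq : ISp X D = xzero X ∪ closure D := by
    apply Set.Subset.antisymm
    · exact Set.union_subset Set.subset_union_left (subset_closure.trans Set.subset_union_right)
    · exact Set.union_subset Set.subset_union_left hclD
  have hcomp : IsCompact (ISp X D) := by
    rw [hISp_eq]
    exact (isCompact_univ.prod isCompact_singleton).union hclDc
  have hXD : ∀ p ∈ xzero X, p ∉ D := by
    intro p hp hpD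
    have h1 := (hDIoc p hpD).1
    have h2 : p.2 = 0 := hp.2
    rw [h2] at h1; exact lt_irrefl 0 h1
  have hdisc : DiscreteTopology ↥D := by
    rw [discreteTopology_subtype_iff]
    intro x hx
    rw [← le_bot_iff, ← hDiso x hx]
    calc 𝓝[≠] x ⊓ 𝓟 D = 𝓝 x ⊓ 𝓟 ({x}ᶜ ∩ D) := by rw [nhdsWithin, inf_assoc, inf_principal]
      _ ≤ 𝓝 x ⊓ 𝓟 ((xzero X ∪ D) \ {x}) := by
          refine inf_le_inf_left _ (principal_mono.mpr ?_)
          rintro q ⟨hq1, hq2⟩; exact ⟨Or.inr hq2, hq1⟩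
      _ = 𝓝[(xzero X ∪ D) \ {x}] x := rfl
  have hcount : D.Countable := by
    have : Countable ↥D := TopologicalSpace.separableSpace_iff_countable.mp inferInstance
    exact Set.countable_coe_iff.mp this
  have hinf : D.Infinite := by
    intro hfin
    have h1 : closure D = D := hfin.isClosed.closure_eq
    have h2 : A ×ˢ ({0} : Set ℝ) = (∅ : Set (X × ℝ)) := by
      rw [← hDcl, h1, Set.diff_self]
    obtain ⟨a, ha⟩ := hAne
    have : ((a, (0 : ℝ)) : X × ℝ) ∈ A ×ˢ ({0} : Set ℝ) := ⟨ha, rfl⟩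
    rw [h2] at this
    exact this
  exact ⟨hcomp, hDcl ▸ subset_rfl, hXD, hcount, hinf⟩

theorem stmt4 {X : Type} [MetricSpace X] [CompactSpace X]
    (A : Set X) (hAne : A.Nonempty) (hAcl : IsClosed A)
    (hAiso : {x : X | 𝓝[≠] x = ⊥} ⊆ A)
    (D D' : Set (X × ℝ)) (hD : D ∈ Dcoll X A) (hD' : D' ∈ Dcoll X A) :
    Nonempty (↥(ISp X D) ≃ₜ ↥(ISp X D')) := by
  classical
  set L : Set (X × ℝ) := A ×ˢ ({0} : Set ℝ) with hLdef
  obtain ⟨hcomp, hLD, hXD, hcount, hinf⟩ := Dcoll_facts hAne hD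
  obtain ⟨hcomp', hLD', hXD', hcount', hinf'⟩ := Dcoll_facts hAne hD'
  have hLc : IsCompact L := (hAcl.isCompact).prod isCompact_singleton
  have hLne : L.Nonempty := hAne.prod ⟨0, rfl⟩
  -- enumerations
  have hDc : Countable ↥D := hcount.to_subtype
  have hDi : Infinite ↥D := hinf.to_subtype
  have hD'c : Countable ↥D' := hcount'.to_subtype
  have hD'i : Infinite ↥D' := hinf'.to_subtype
  obtain ⟨den⟩ := nonempty_denumerable ↥D
  obtain ⟨den'⟩ := nonempty_denumerable ↥D'
  set e : ℕ → X × ℝ := fun n => ((Denumerable.eqv ↥D).symm n : ↥D) with hedef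
  set e' : ℕ → X × ℝ := fun n => ((Denumerable.eqv ↥D').symm n : ↥D') with he'def
  have heD : ∀ k, e k ∈ D := fun k => ((Denumerable.eqv ↥D).symm k).2
  have he'D' : ∀ k, e' k ∈ D' := fun k => ((Denumerable.eqv ↥D').symm k).2
  have heS : ∀ p ∈ D, ∃ k, e k = p := fun p hp =>
    ⟨Denumerable.eqv ↥D ⟨p, hp⟩, by simp [hedef]⟩
  have he'S : ∀ q ∈ D', ∃ k, e' k = q := fun q hq =>
    ⟨Denumerable.eqv ↥D' ⟨q, hq⟩, by simp [he'def]⟩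
  -- far finiteness
  have hDiso := hD.2.2.1
  have hD'iso := hD'.2.2.1
  have hfarD : ∀ ε : ℝ, 0 < ε → {p | p ∈ D ∧ ε ≤ infDist p L}.Finite := fun ε hε =>
    aux_finite_far hcomp Set.subset_union_right hDiso hD.2.2.2 hLne hε
  have hfarD' : ∀ ε : ℝ, 0 < ε → {q | q ∈ D' ∧ ε ≤ infDist q L}.Finite := fun ε hε =>
    aux_finite_far hcomp' Set.subset_union_right hD'iso hD'.2.2.2 hLne hε
  -- the matching
  set M : Set ((X × ℝ) × (X × ℝ)) := bfM L D D' e e' with hMdef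
  have hmemM : ∀ {pq : (X × ℝ) × (X × ℝ)}, pq ∈ M → pq.1 ∈ D ∧ pq.2 ∈ D' :=
    fun h => bfM_mem heD he'D' h
  have htot : ∀ p ∈ D, ∃ q, (p, q) ∈ M :=
    fun p hp => bfM_total hLc hLne hLD' heD he'D' heS hp
  have hsur : ∀ q ∈ D', ∃ p, (p, q) ∈ M :=
    fun q hq => bfM_surj hLc hLne hLD heD he'D' he'S hq
  have huniq1 : ∀ {p q : X × ℝ}, (p, q) ∈ M → matchFun M p = q := by
    intro p q h
    have h2 := matchFun_mem ⟨q, h⟩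
    have := bfM_inj1 heD he'D' h2 h rfl
    exact congrArg Prod.snd this
  have huniq2 : ∀ {p q : X × ℝ}, (p, q) ∈ M → matchInv M q = p := by
    intro p q h
    have h2 := matchInv_mem ⟨p, h⟩
    have := bfM_inj2 heD he'D' h2 h rfl
    exact congrArg Prod.fst this
  have hmM : ∀ p ∈ D, (p, matchFun M p) ∈ M := fun p hp => matchFun_mem (htot p hp)
  have hm'M : ∀ q ∈ D', (matchInv M q, q) ∈ M := fun q hq => matchInv_mem (hsur q hq)
  have hmD' : ∀ p ∈ D, matchFun M p ∈ D' := fun p hp => (hmemM (hmM p hp)).2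
  have hm'D : ∀ q ∈ D', matchInv M q ∈ D := fun q hq => (hmemM (hm'M q hq)).1
  -- the bijection
  have hz0 : ∀ z : ↥(ISp X D), z.val ∉ D → z.val ∈ xzero X := fun z h => z.2.resolve_right h
  have hz0' : ∀ w : ↥(ISp X D'), w.val ∉ D' → w.val ∈ xzero X := fun w h => w.2.resolve_right h
  set f : ↥(ISp X D) → ↥(ISp X D') := fun z =>
    if h : z.val ∈ D then ⟨matchFun M z.val, Or.inr (hmD' _ h)⟩
    else ⟨z.val, Or.inl (hz0 z h)⟩ with hfdef
  set g : ↥(ISp X D') → ↥(ISp X D) := fun w =>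
    if h : w.val ∈ D' then ⟨matchInv M w.val, Or.inr (hm'D _ h)⟩
    else ⟨w.val, Or.inl (hz0' w h)⟩ with hgdef
  have hfval_mem : ∀ z : ↥(ISp X D), z.val ∈ D → (f z).val = matchFun M z.val := by
    intro z h; rw [hfdef]; simp only [dif_pos h]
  have hfval_not : ∀ z : ↥(ISp X D), z.val ∉ D → (f z).val = z.val := by
    intro z h; rw [hfdef]; simp only [dif_neg h]
  have hgf : ∀ z, g (f z) = z := by
    intro z
    by_cases h : z.val ∈ D
    · apply Subtype.ext
      have h1 : (f z).val = matchFun M z.val := hfval_mem z h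
      have h2 : (f z).val ∈ D' := h1 ▸ hmD' _ h
      rw [hgdef]
      simp only [dif_pos h2]
      rw [h1]
      exact huniq2 (hmM z.val h)
    · apply Subtype.ext
      have h1 : (f z).val = z.val := hfval_not z h
      have h2 : (f z).val ∉ D' := by rw [h1]; exact hXD' _ (hz0 z h)
      rw [hgdef]
      simp only [dif_neg h2]
      exact h1
  have hfg : ∀ w, f (g w) = w := by
    intro w
    by_cases h : w.val ∈ D'
    · apply Subtype.ext
      have h1 : (g w).val = matchInv M w.val := by rw [hgdef]; simp only [dif_pos h]
      have h2 : (g w).val ∈ D := h1 ▸ hm'D _ h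
      rw [hfdef]
      simp only [dif_pos h2]
      rw [h1]
      exact huniq1 (hm'M w.val h)
    · apply Subtype.ext
      have h1 : (g w).val = w.val := by rw [hgdef]; simp only [dif_neg h]
      have h2 : (g w).val ∉ D := by rw [h1]; exact hXD _ (hz0' w h)
      rw [hfdef]
      simp only [dif_neg h2]
      exact h1
  -- continuity
  have hcont : Continuous f := by
    rw [continuous_iff_continuousAt]
    intro z
    by_cases hz : z.val ∈ D
    · -- z is isolated
      have hb : 𝓝[≠] z = ⊥ := by
        rw [nhds_ne_subtype_eq_bot_iff]
        rw [← le_bot_iff, ← hDiso z.val hz]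
        calc 𝓝[≠] (z.val) ⊓ 𝓟 (ISp X D) = 𝓝 z.val ⊓ 𝓟 ({z.val}ᶜ ∩ (xzero X ∪ D)) := by
              rw [nhdsWithin, inf_assoc, inf_principal]; rfl
          _ ≤ 𝓝 z.val ⊓ 𝓟 ((xzero X ∪ D) \ {z.val}) := by
              refine inf_le_inf_left _ (principal_mono.mpr ?_)
              rintro q ⟨hq1, hq2⟩; exact ⟨hq2, hq1⟩
          _ = 𝓝[(xzero X ∪ D) \ {z.val}] z.val := rfl
      unfold ContinuousAt
      rw [← nhdsNE_sup_pure z, hb, bot_sup_eq]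
      exact tendsto_pure_nhds f z
    · -- z is in X × {0}
      have hfz : (f z).val = z.val := hfval_not z hz
      rw [ContinuousAt, Metric.tendsto_nhds]
      intro ε hε
      have hEfin : {pq | pq ∈ M ∧ ε / 2 ≤ dist pq.1 pq.2}.Finite :=
        bfM_far_finite heD he'D' (by linarith) (hfarD _ (by linarith)) (hfarD' _ (by linarith))
      have hE1fin : (Prod.fst '' {pq | pq ∈ M ∧ ε / 2 ≤ dist pq.1 pq.2}).Finite :=
        hEfin.image _
      have hzE1 : z.val ∉ Prod.fst '' {pq | pq ∈ M ∧ ε / 2 ≤ dist pq.1 pq.2} := by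
        rintro ⟨pq, ⟨hpq, _⟩, heq⟩
        exact hz (heq ▸ (hmemM hpq).1)
      have hU : IsOpen (Prod.fst '' {pq | pq ∈ M ∧ ε / 2 ≤ dist pq.1 pq.2})ᶜ :=
        hE1fin.isClosed.isOpen_compl
      have hA : ∀ᶠ w : ↥(ISp X D) in 𝓝 z,
          w.val ∈ (Prod.fst '' {pq | pq ∈ M ∧ ε / 2 ≤ dist pq.1 pq.2})ᶜ :=
        continuous_subtype_val.continuousAt.preimage_mem_nhds (hU.mem_nhds hzE1)
      have hB : ∀ᶠ w : ↥(ISp X D) in 𝓝 z, dist w z < ε / 2 :=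
        eventually_of_mem (Metric.ball_mem_nhds z (by linarith)) (fun w hw => Metric.mem_ball.mp hw)
      filter_upwards [hA, hB] with w hw1 hw2
      rw [Subtype.dist_eq, hfz]
      by_cases hw : w.val ∈ D
      · have hfw : (f w).val = matchFun M w.val := hfval_mem w hw
        have hpair := hmM w.val hw
        have hnear : dist w.val (matchFun M w.val) < ε / 2 := by
          by_contra hge
          push_neg at hge
          exact hw1 ⟨(w.val, matchFun M w.val), ⟨hpair, hge⟩, rfl⟩
        calc dist (f w).val z.val ≤ dist (f w).val w.val + dist w.val z.val := dist_triangle _ _ _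
          _ < ε / 2 + ε / 2 := by
              apply add_lt_add
              · rw [hfw, dist_comm]; exact hnear
              · exact hw2
          _ = ε := by ring
      · have hfw : (f w).val = w.val := hfval_not w hw
        rw [hfw]
        calc dist w.val z.val = dist w z := rfl
          _ < ε / 2 := hw2
          _ < ε := by linarith
  -- assemble
  have : CompactSpace ↥(ISp X D) := isCompact_iff_compactSpace.mp hcomp
  exact ⟨Continuous.homeoOfEquivCompactToT2 (f := ⟨f, g, hgf, hfg⟩) hcont⟩

end main
end

section
/- Let X, Y be compact metric spaces, let A ⊆ X and B ⊆ Y be nonempty closed subsets containing all isolated points of X and Y respectively, and let D ∈ D_{X,A} and D' ∈ D_{Y,B}. Then the following are equivalent: (i) there is a homeomorphism f : X → Y with f[A] = B; (ii) I(X,A;D) and I(Y,B;D') are homeomorphic. -/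
open Topology

set_option linter.unusedSectionVars false
open Filter Set Metric

section Basic
variable {X : Type} [MetricSpace X] [CompactSpace X] {A : Set X} {D : Set (X × ℝ)}

lemma mem_xzero_iff {p : X × ℝ} : p ∈ xzero X ↔ p.2 = 0 :=
  ⟨fun h => h.2, fun h => ⟨trivial, h⟩⟩

lemma dcoll_pos (hD : D ∈ Dcoll X A) {p : X × ℝ} (hp : p ∈ D) : 0 < p.2 := (hD.2.1 p hp).1

lemma dcoll_notMem (hD : D ∈ Dcoll X A) {p : X × ℝ} (hp : p.2 = 0) : p ∉ D :=
  fun h => absurd hp (ne_of_gt (dcoll_pos hD h))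

lemma dcoll_closure (hD : D ∈ Dcoll X A) : closure D = D ∪ A ×ˢ ({0} : Set ℝ) := by
  rw [← hD.2.2.2, union_diff_cancel' (fun _ h => h) subset_closure]

lemma isClosed_ISp (hD : D ∈ Dcoll X A) : IsClosed (ISp X D) := by
  have h1 : IsClosed (xzero X) := isClosed_univ.prod isClosed_singleton
  have : closure (ISp X D) ⊆ ISp X D := by
    rw [ISp, closure_union, h1.closure_eq, dcoll_closure hD]
    rintro p (hp | (hp | hp))
    · exact Or.inl hp
    · exact Or.inr hp
    · exact Or.inl ⟨trivial, hp.2⟩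
  exact isClosed_of_closure_subset this

lemma isCompact_ISp (hD : D ∈ Dcoll X A) : IsCompact (ISp X D) := by
  refine IsCompact.of_isClosed_subset (isCompact_univ.prod (isCompact_Icc (a := (0:ℝ)) (b := 1)))
    (isClosed_ISp hD) ?_
  rintro p (hp | hp)
  · exact ⟨trivial, by rw [hp.2]; exact ⟨le_refl 0, zero_le_one⟩⟩
  · exact ⟨trivial, le_of_lt (dcoll_pos hD hp), (hD.2.1 p hp).2⟩

lemma dcoll_mem_closure (hD : D ∈ Dcoll X A) {a : X} (ha : a ∈ A) :
    (a, (0:ℝ)) ∈ closure D \ D := by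
  rw [hD.2.2.2]; exact ⟨ha, rfl⟩

/-- every point of A×{0} is an accumulation point of D, so each ball meets D in an
infinite set -/
lemma infinite_inter_ball {Z : Type*} [MetricSpace Z] {S : Set Z} {b : Z}
    (hb : b ∈ closure S \ S) {r : ℝ} (hr : 0 < r) : (S ∩ Metric.ball b r).Infinite := by
  intro hfin
  have hcl : IsClosed (S ∩ Metric.ball b r) := hfin.isClosed
  have hb2 : b ∈ closure (S ∩ Metric.ball b r) := by
    have := (Metric.isOpen_ball (x := b) (ε := r)).inter_closure (t := S)
    have hbmem : b ∈ Metric.ball b r ∩ closure S := ⟨Metric.mem_ball_self hr, hb.1⟩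
    have := this hbmem
    rwa [inter_comm] at this
  rw [hcl.closure_eq] at hb2
  exact hb.2 hb2.1

lemma dcoll_infinite (hD : D ∈ Dcoll X A) (hAne : A.Nonempty) : D.Infinite := by
  obtain ⟨a, ha⟩ := hAne
  have h := infinite_inter_ball (dcoll_mem_closure hD ha) one_pos
  exact fun hfin => h (hfin.inter_of_left _)


end Basic

section Basic2
variable {Z : Type*} [MetricSpace Z]

lemma nhdsWithin_diff_singleton_eq (S : Set Z) (x : Z) :
    𝓝[≠] x ⊓ 𝓟 S = 𝓝[S \ {x}] x := by
  rw [nhdsWithin, inf_assoc, inf_principal, nhdsWithin]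
  congr 1
  rw [Set.diff_eq, Set.inter_comm]

lemma isolated_subtype_iff {S : Set Z} (x : S) :
    𝓝[≠] x = ⊥ ↔ 𝓝[S \ {(x : Z)}] (x : Z) = ⊥ := by
  rw [nhds_ne_subtype_eq_bot_iff, nhdsWithin_diff_singleton_eq]

end Basic2

section Basic3
variable {X : Type} [MetricSpace X] [CompactSpace X] {A : Set X} {D : Set (X × ℝ)}

lemma dcoll_discrete (hD : D ∈ Dcoll X A) : DiscreteTopology ↥D := by
  refine discreteTopology_subtype_iff.2 (fun p hp => ?_)
  rw [nhdsWithin_diff_singleton_eq]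
  have hsub : D \ {p} ⊆ (xzero X ∪ D) \ {p} := fun q hq => ⟨Or.inr hq.1, hq.2⟩
  exact eq_bot_mono (nhdsWithin_mono p hsub) (hD.2.2.1 p hp)

lemma dcoll_countable (hD : D ∈ Dcoll X A) : D.Countable := by
  have := dcoll_discrete hD
  exact Set.countable_coe_iff.mp (TopologicalSpace.separableSpace_iff_countable.mp inferInstance)

/-- points of `D` are isolated in `ISp X D`, points of `X×{0}` are not. -/
lemma dcoll_isolated_iff (hD : D ∈ Dcoll X A) (hAiso : {x : X | 𝓝[≠] x = ⊥} ⊆ A)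
    (p : ↥(ISp X D)) : 𝓝[≠] p = ⊥ ↔ (p : X × ℝ) ∈ D := by
  rw [isolated_subtype_iff]
  constructor
  · intro h
    by_contra hpD
    -- then p ∈ xzero X, p = (x, 0)
    have hpx : (p : X × ℝ) ∈ xzero X := p.2.resolve_right hpD
    have hp2 : (p : X × ℝ).2 = 0 := hpx.2
    by_cases hxA : (p : X × ℝ).1 ∈ A
    · -- p ∈ closure D \ D, so D accumulates at p
      have hmem : (p : X × ℝ) ∈ closure D \ D := by
        have := dcoll_mem_closure hD hxA
        rwa [show ((p : X × ℝ).1, (0:ℝ)) = (p : X × ℝ) from Prod.ext rfl hp2.symm] at this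
      have h1 : (𝓝[D] (p : X × ℝ)).NeBot := mem_closure_iff_nhdsWithin_neBot.mp hmem.1
      have h2 : D ⊆ ISp X D \ {(p : X × ℝ)} := fun q hq =>
        ⟨Or.inr hq, fun he => hmem.2 (he ▸ hq)⟩
      exact absurd h (NeBot.mono h1 (nhdsWithin_mono _ h2)).ne
    · -- p.1 is not isolated in X
      have hx : (𝓝[≠] (p : X × ℝ).1).NeBot := by
        rcases eq_or_ne (𝓝[≠] (p : X × ℝ).1) ⊥ with hb | hb
        · exact absurd (hAiso hb) hxA
        · exact ⟨hb⟩
      -- map through x ↦ (x, 0)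
      have hcont : Tendsto (fun x : X => (x, (0:ℝ))) (𝓝[≠] (p : X × ℝ).1)
          (𝓝[ISp X D \ {(p : X × ℝ)}] (p : X × ℝ)) := by
        rw [tendsto_nhdsWithin_iff]
        constructor
        · have : Tendsto (fun x : X => (x, (0:ℝ))) (𝓝 (p : X × ℝ).1)
              (𝓝 ((p : X × ℝ).1, (0:ℝ))) :=
            (continuous_id.prodMk continuous_const).tendsto _
          rw [show ((p : X × ℝ).1, (0:ℝ)) = (p : X × ℝ) from Prod.ext rfl hp2.symm] at this
          exact this.mono_left nhdsWithin_le_nhds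
        · refine eventually_nhdsWithin_of_forall (fun x hx => ⟨Or.inl ⟨trivial, rfl⟩, ?_⟩)
          intro he
          apply hx
          have : x = (p : X × ℝ).1 := congrArg Prod.fst he
          exact this
      exact absurd h (hx.map _ |>.mono hcont).ne
  · intro hpD
    have hsub : ISp X D \ {(p : X × ℝ)} ⊆ (xzero X ∪ D) \ {(p : X × ℝ)} := fun q hq => hq
    exact eq_bot_mono (nhdsWithin_mono _ hsub) (hD.2.2.1 _ hpD)

end Basic3

section BackForth
variable {α β : Type*}

lemma list_fresh {γ : Type*} [Infinite γ] (e : ℕ ≃ γ) (l : List γ) : ∃ k, e k ∉ l := by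
  by_contra h
  push_neg at h
  have : (Set.univ : Set γ) ⊆ {x | x ∈ l} := fun x _ => by
    have := h (e.symm x); simpa using this
  exact Set.infinite_univ ((l.finite_toSet.subset this))

/-- Back-and-forth: a bijection between two countably infinite sets realizing a relation
with infinite fibers on both sides. -/
lemma exists_equiv_of_rel {S : Set α} {T : Set β} (hSc : S.Countable) (hSi : S.Infinite)
    (hTc : T.Countable) (hTi : T.Infinite) (R : α → β → Prop)
    (h1 : ∀ a ∈ S, {b | b ∈ T ∧ R a b}.Infinite)
    (h2 : ∀ b ∈ T, {a | a ∈ S ∧ R a b}.Infinite) :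
    ∃ φ : ↥S ≃ ↥T, ∀ a : ↥S, R a (φ a) := by
  classical
  have hS1 : Countable ↥S := hSc.to_subtype
  have hS2 : Infinite ↥S := Set.infinite_coe_iff.2 hSi
  have hT1 : Countable ↥T := hTc.to_subtype
  have hT2 : Infinite ↥T := Set.infinite_coe_iff.2 hTi
  obtain ⟨dS⟩ := nonempty_denumerable ↥S
  obtain ⟨dT⟩ := nonempty_denumerable ↥T
  set e : ℕ ≃ ↥S := (Denumerable.eqv ↥S).symm with he
  set e' : ℕ ≃ ↥T := (Denumerable.eqv ↥T).symm with he'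
  have exS : ∀ l : List (↥S × ↥T), ∃ k, e k ∉ l.map Prod.fst :=
    fun l => list_fresh e (l.map Prod.fst)
  have exT : ∀ l : List (↥S × ↥T), ∃ k, e' k ∉ l.map Prod.snd :=
    fun l => list_fresh e' (l.map Prod.snd)
  have main : ∀ (l : List (↥S × ↥T)) (n : ℕ), ∃ q : ↥S × ↥T,
      R (q.1 : α) (q.2 : β) ∧ q.1 ∉ l.map Prod.fst ∧ q.2 ∉ l.map Prod.snd ∧
      (n % 2 = 0 → q.1 = e (Nat.find (exS l))) ∧ (n % 2 = 1 → q.2 = e' (Nat.find (exT l))) := by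
    intro l n
    rcases Nat.mod_two_eq_zero_or_one n with hn | hn
    · -- even step
      set a : ↥S := e (Nat.find (exS l)) with ha
      have hinf := h1 (a : α) a.2
      have hfin : {b : β | ∃ q ∈ l, (q.2 : β) = b}.Finite := by
        have : {b : β | ∃ q ∈ l, (q.2 : β) = b} = (fun q : ↥S × ↥T => (q.2 : β)) '' {q | q ∈ l} := by
          ext b; simp [Set.mem_image]
        rw [this]; exact l.finite_toSet.image _
      obtain ⟨b, hb⟩ := (hinf.diff hfin).nonempty
      refine ⟨(a, ⟨b, hb.1.1⟩), hb.1.2, Nat.find_spec (exS l), ?_, fun _ => rfl,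
        fun h => absurd h (by omega)⟩
      intro hmem
      rcases List.mem_map.1 hmem with ⟨q, hq, hq2⟩
      exact hb.2 ⟨q, hq, congrArg Subtype.val hq2⟩
    · -- odd step
      set b : ↥T := e' (Nat.find (exT l)) with hb
      have hinf := h2 (b : β) b.2
      have hfin : {a : α | ∃ q ∈ l, (q.1 : α) = a}.Finite := by
        have : {a : α | ∃ q ∈ l, (q.1 : α) = a} = (fun q : ↥S × ↥T => (q.1 : α)) '' {q | q ∈ l} := by
          ext a; simp [Set.mem_image]
        rw [this]; exact l.finite_toSet.image _
      obtain ⟨a, hha⟩ := (hinf.diff hfin).nonempty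
      refine ⟨(⟨a, hha.1.1⟩, b), hha.1.2, ?_, Nat.find_spec (exT l),
        fun h => absurd h (by omega), fun _ => rfl⟩
      intro hmem
      rcases List.mem_map.1 hmem with ⟨q, hq, hq2⟩
      exact hha.2 ⟨q, hq, congrArg Subtype.val hq2⟩
  -- the recursion
  set step : List (↥S × ↥T) → ℕ → ↥S × ↥T := fun l n => (main l n).choose with hstep
  set L : ℕ → List (↥S × ↥T) := fun n => Nat.rec [] (fun m lm => lm ++ [step lm m]) n with hL
  have hLsucc : ∀ n, L (n + 1) = L n ++ [step (L n) n] := fun n => rfl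
  set P : ℕ → ↥S × ↥T := fun n => step (L n) n with hP
  have spec : ∀ n, R ((P n).1 : α) ((P n).2 : β) ∧ (P n).1 ∉ (L n).map Prod.fst ∧
      (P n).2 ∉ (L n).map Prod.snd ∧
      (n % 2 = 0 → (P n).1 = e (Nat.find (exS (L n)))) ∧
      (n % 2 = 1 → (P n).2 = e' (Nat.find (exT (L n)))) :=
    fun n => (main (L n) n).choose_spec
  have memL : ∀ n m, m < n → P m ∈ L n := by
    intro n
    induction n with
    | zero => intro m hm; omega
    | succ k ih =>
      intro m hm
      rw [hLsucc k, List.mem_append]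
      rcases Nat.lt_succ_iff_lt_or_eq.1 hm with h | h
      · exact Or.inl (ih m h)
      · exact Or.inr (by rw [h]; exact List.mem_singleton.2 rfl)
  have memL' : ∀ n q, q ∈ L n → ∃ m < n, q = P m := by
    intro n
    induction n with
    | zero => intro q hq; simp [hL] at hq
    | succ k ih =>
      intro q hq
      rw [hLsucc k, List.mem_append] at hq
      rcases hq with h | h
      · obtain ⟨m, hm, hq⟩ := ih q h
        exact ⟨m, by omega, hq⟩
      · exact ⟨k, by omega, List.mem_singleton.1 h⟩
  have uinj : Function.Injective (fun n => (P n).1) := by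
    intro m n hmn0
    have hmn : (P m).1 = (P n).1 := hmn0
    by_contra hne
    rcases Nat.lt_or_ge m n with h | h
    · exact (spec n).2.1 (List.mem_map.2 ⟨P m, memL n m h, hmn⟩)
    · have h' : n < m := by omega
      exact (spec m).2.1 (List.mem_map.2 ⟨P n, memL m n h', hmn.symm⟩)
  have vinj : Function.Injective (fun n => (P n).2) := by
    intro m n hmn0
    have hmn : (P m).2 = (P n).2 := hmn0
    by_contra hne
    rcases Nat.lt_or_ge m n with h | h
    · exact (spec n).2.2.1 (List.mem_map.2 ⟨P m, memL n m h, hmn⟩)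
    · have h' : n < m := by omega
      exact (spec m).2.2.1 (List.mem_map.2 ⟨P n, memL m n h', hmn.symm⟩)
  have usurj : Function.Surjective (fun n => (P n).1) := by
    intro x
    by_contra hx
    push_neg at hx
    have hfresh : ∀ n, e (e.symm x) ∉ (L n).map Prod.fst := by
      intro n hmem
      rcases List.mem_map.1 hmem with ⟨q, hq, hq1⟩
      obtain ⟨m, _, hqP⟩ := memL' n q hq
      exact hx m (by rw [← hqP, hq1]; simp)
    have hle : ∀ k, Nat.find (exS (L (2 * k))) ≤ e.symm x :=
      fun k => Nat.find_le (hfresh (2 * k))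
    have hjinj : Function.Injective (fun k => Nat.find (exS (L (2 * k)))) := by
      intro k k' hkk0
      have hkk : Nat.find (exS (L (2 * k))) = Nat.find (exS (L (2 * k'))) := hkk0
      by_contra hne
      have h1 : (P (2 * k)).1 = e (Nat.find (exS (L (2 * k)))) := (spec (2 * k)).2.2.2.1 (by omega)
      have h2 : (P (2 * k')).1 = e (Nat.find (exS (L (2 * k')))) :=
        (spec (2 * k')).2.2.2.1 (by omega)
      have : (P (2 * k)).1 = (P (2 * k')).1 := by rw [h1, h2, hkk]
      have := @uinj (2 * k) (2 * k') this
      omega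
    have : Function.Injective (fun k => (⟨Nat.find (exS (L (2 * k))), Nat.lt_succ_of_le (hle k)⟩ :
        Fin (e.symm x + 1))) := by
      intro k k' h
      exact hjinj (congrArg Fin.val h)
    exact absurd this (Finite.exists_ne_map_eq_of_infinite _ |> fun ⟨k, k', hne, heq⟩ hinj =>
      hne (hinj heq))
  have vsurj : Function.Surjective (fun n => (P n).2) := by
    intro y
    by_contra hy
    push_neg at hy
    have hfresh : ∀ n, e' (e'.symm y) ∉ (L n).map Prod.snd := by
      intro n hmem
      rcases List.mem_map.1 hmem with ⟨q, hq, hq1⟩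
      obtain ⟨m, _, hqP⟩ := memL' n q hq
      exact hy m (by rw [← hqP, hq1]; simp)
    have hle : ∀ k, Nat.find (exT (L (2 * k + 1))) ≤ e'.symm y :=
      fun k => Nat.find_le (hfresh (2 * k + 1))
    have hjinj : Function.Injective (fun k => Nat.find (exT (L (2 * k + 1)))) := by
      intro k k' hkk0
      have hkk : Nat.find (exT (L (2 * k + 1))) = Nat.find (exT (L (2 * k' + 1))) := hkk0
      by_contra hne
      have h1 : (P (2 * k + 1)).2 = e' (Nat.find (exT (L (2 * k + 1)))) :=
        (spec (2 * k + 1)).2.2.2.2 (by omega)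
      have h2 : (P (2 * k' + 1)).2 = e' (Nat.find (exT (L (2 * k' + 1)))) :=
        (spec (2 * k' + 1)).2.2.2.2 (by omega)
      have : (P (2 * k + 1)).2 = (P (2 * k' + 1)).2 := by rw [h1, h2, hkk]
      have := @vinj (2 * k + 1) (2 * k' + 1) this
      omega
    have : Function.Injective (fun k => (⟨Nat.find (exT (L (2 * k + 1))),
        Nat.lt_succ_of_le (hle k)⟩ : Fin (e'.symm y + 1))) := by
      intro k k' h
      exact hjinj (congrArg Fin.val h)
    exact absurd this (Finite.exists_ne_map_eq_of_infinite _ |> fun ⟨k, k', hne, heq⟩ hinj =>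
      hne (hinj heq))
  set u : ℕ ≃ ↥S := Equiv.ofBijective _ ⟨uinj, usurj⟩ with hu
  set v : ℕ ≃ ↥T := Equiv.ofBijective _ ⟨vinj, vsurj⟩ with hv
  refine ⟨u.symm.trans v, fun a => ?_⟩
  have h1 : u (u.symm a) = a := u.apply_symm_apply a
  have h2 : R ((P (u.symm a)).1 : α) ((P (u.symm a)).2 : β) := (spec (u.symm a)).1
  have h3 : (P (u.symm a)).1 = a := h1
  rw [h3] at h2
  exact h2
end BackForth

section Forward
variable {X Y : Type} [MetricSpace X] [CompactSpace X] [MetricSpace Y] [CompactSpace Y]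

lemma forward_dir {A : Set X} {B : Set Y} {D : Set (X × ℝ)} {D' : Set (Y × ℝ)}
    (hAne : A.Nonempty) (hBne : B.Nonempty) (hBcl : IsClosed B)
    (hD : D ∈ Dcoll X A) (hD' : D' ∈ Dcoll Y B)
    (f : X ≃ₜ Y) (hf : f '' A = B) :
    Nonempty (↥(ISp X D) ≃ₜ ↥(ISp Y D')) := by
  classical
  set Fm : X × ℝ → Y × ℝ := fun p => (f p.1, p.2) with hFmdef
  set Gm : Y × ℝ → X × ℝ := fun q => (f.symm q.1, q.2) with hGmdef
  have hGF : ∀ p, Gm (Fm p) = p := fun p => by simp [hFmdef, hGmdef]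
  have hFG : ∀ q, Fm (Gm q) = q := fun q => by simp [hFmdef, hGmdef]
  have hFm : Continuous Fm := (f.continuous.comp continuous_fst).prodMk continuous_snd
  have hGm : Continuous Gm := (f.symm.continuous.comp continuous_fst).prodMk continuous_snd
  set A0 : Set (X × ℝ) := A ×ˢ ({0} : Set ℝ) with hA0def
  set B0 : Set (Y × ℝ) := B ×ˢ ({0} : Set ℝ) with hB0def
  have himg : Fm '' A0 = B0 := by
    ext q
    constructor
    · rintro ⟨p, hp, rfl⟩
      exact ⟨hf ▸ Set.mem_image_of_mem f hp.1, hp.2⟩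
    · rintro ⟨hq1, hq2⟩
      rw [← hf] at hq1
      obtain ⟨x, hx, hxq⟩ := hq1
      exact ⟨(x, q.2), ⟨hx, hq2⟩, by simp [hFmdef, hxq]⟩
  have hB0compact : IsCompact B0 := (hBcl.isCompact).prod isCompact_singleton
  have hB0closed : IsClosed B0 := hBcl.prod isClosed_singleton
  have hB0ne : B0.Nonempty := hBne.prod (Set.singleton_nonempty 0)
  set Rel : (X × ℝ) → (Y × ℝ) → Prop :=
    fun d d' => dist (Fm d) d' ≤ 2 * (infDist (Fm d) B0 + infDist d' B0) with hhRel
  -- forward candidates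
  have L1 : ∀ d ∈ D, {d' | d' ∈ D' ∧ Rel d d'}.Infinite := by
    intro d hd
    have hFd : Fm d ∉ B0 := fun h => (dcoll_pos hD hd).ne' h.2
    have hs : 0 < infDist (Fm d) B0 := (hB0closed.notMem_iff_infDist_pos hB0ne).1 hFd
    obtain ⟨b, hbB0, hbd⟩ := hB0compact.exists_infDist_eq_dist hB0ne (Fm d)
    have hb' : b ∈ closure D' \ D' := by rw [hD'.2.2.2]; exact hbB0
    refine (infinite_inter_ball hb' hs).mono ?_
    rintro d'' ⟨hd''D, hd''b⟩
    refine ⟨hd''D, ?_⟩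
    have h1 : dist (Fm d) d'' ≤ dist (Fm d) b + dist b d'' := dist_triangle _ _ _
    have h2 : dist b d'' < infDist (Fm d) B0 := by
      rw [dist_comm]; exact Metric.mem_ball.1 hd''b
    have h3 : (0:ℝ) ≤ infDist d'' B0 := infDist_nonneg
    simp only [hhRel]
    nlinarith [hbd]
  -- backward candidates
  have L2 : ∀ d' ∈ D', {d | d ∈ D ∧ Rel d d'}.Infinite := by
    intro d' hd'
    have hd'B0 : d' ∉ B0 := fun h => (dcoll_pos hD' hd').ne' h.2
    have ht : 0 < infDist d' B0 := (hB0closed.notMem_iff_infDist_pos hB0ne).1 hd'B0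
    obtain ⟨b', hb'B0, hb'd⟩ := hB0compact.exists_infDist_eq_dist hB0ne d'
    obtain ⟨a', ha'A0, ha'b⟩ : ∃ a' ∈ A0, Fm a' = b' := by
      rw [← himg] at hb'B0; exact hb'B0.imp (fun x hx => ⟨hx.1, hx.2⟩)
    obtain ⟨δ, hδpos, hδ⟩ := Metric.continuous_iff.1 hFm a' (infDist d' B0) ht
    have ha' : a' ∈ closure D \ D := by rw [hD.2.2.2]; exact ha'A0
    refine (infinite_inter_ball ha' hδpos).mono ?_
    rintro d ⟨hdD, hdb⟩
    refine ⟨hdD, ?_⟩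
    have h1 : dist (Fm d) d' ≤ dist (Fm d) b' + dist b' d' := dist_triangle _ _ _
    have h2 : dist (Fm d) b' < infDist d' B0 := by
      rw [← ha'b]; exact hδ d (Metric.mem_ball.1 hdb)
    have h3 : (0:ℝ) ≤ infDist (Fm d) B0 := infDist_nonneg
    have h4 : dist b' d' = infDist d' B0 := by rw [dist_comm]; exact hb'd.symm
    simp only [hhRel]
    nlinarith
  obtain ⟨φ, hφ⟩ := exists_equiv_of_rel (dcoll_countable hD) (dcoll_infinite hD hAne)
    (dcoll_countable hD') (dcoll_infinite hD' hBne) Rel L1 L2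
  -- the equivalence
  have hmem1 : ∀ (p : ↥(ISp X D)) (h : (p : X × ℝ) ∈ D),
      ((φ ⟨(p : X × ℝ), h⟩ : ↥D') : Y × ℝ) ∈ ISp Y D' := fun p h => Or.inr (φ ⟨_, h⟩).2
  have hmem2 : ∀ (p : ↥(ISp X D)), (p : X × ℝ) ∉ D → Fm (p : X × ℝ) ∈ ISp Y D' := by
    intro p h
    have := p.2.resolve_right h
    exact Or.inl ⟨trivial, this.2⟩
  have hmem3 : ∀ (q : ↥(ISp Y D')) (h : (q : Y × ℝ) ∈ D'),
      ((φ.symm ⟨(q : Y × ℝ), h⟩ : ↥D) : X × ℝ) ∈ ISp X D := fun q h => Or.inr (φ.symm ⟨_, h⟩).2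
  have hmem4 : ∀ (q : ↥(ISp Y D')), (q : Y × ℝ) ∉ D' → Gm (q : Y × ℝ) ∈ ISp X D := by
    intro q h
    have := q.2.resolve_right h
    exact Or.inl ⟨trivial, this.2⟩
  set toF : ↥(ISp X D) → ↥(ISp Y D') := fun p =>
    if h : (p : X × ℝ) ∈ D then ⟨_, hmem1 p h⟩ else ⟨_, hmem2 p h⟩ with htoF
  set invF : ↥(ISp Y D') → ↥(ISp X D) := fun q =>
    if h : (q : Y × ℝ) ∈ D' then ⟨_, hmem3 q h⟩ else ⟨_, hmem4 q h⟩ with hinvF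
  have toF_pos : ∀ (p : ↥(ISp X D)) (h : (p : X × ℝ) ∈ D),
      (toF p : Y × ℝ) = ((φ ⟨(p : X × ℝ), h⟩ : ↥D') : Y × ℝ) := by
    intro p h; simp only [htoF, dif_pos h]
  have toF_neg : ∀ (p : ↥(ISp X D)), (p : X × ℝ) ∉ D → (toF p : Y × ℝ) = Fm (p : X × ℝ) := by
    intro p h; simp only [htoF, dif_neg h]
  have invF_pos : ∀ (q : ↥(ISp Y D')) (h : (q : Y × ℝ) ∈ D'),
      (invF q : X × ℝ) = ((φ.symm ⟨(q : Y × ℝ), h⟩ : ↥D) : X × ℝ) := by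
    intro q h; simp only [hinvF, dif_pos h]
  have invF_neg : ∀ (q : ↥(ISp Y D')), (q : Y × ℝ) ∉ D' → (invF q : X × ℝ) = Gm (q : Y × ℝ) := by
    intro q h; simp only [hinvF, dif_neg h]
  have hleft : Function.LeftInverse invF toF := by
    intro p
    by_cases h : (p : X × ℝ) ∈ D
    · have e1 := toF_pos p h
      have h2 : (toF p : Y × ℝ) ∈ D' := by rw [e1]; exact (φ ⟨_, h⟩).2
      apply Subtype.ext
      rw [invF_pos (toF p) h2]
      have : (⟨(toF p : Y × ℝ), h2⟩ : ↥D') = φ ⟨(p : X × ℝ), h⟩ := Subtype.ext e1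
      rw [this, Equiv.symm_apply_apply]
    · have e1 := toF_neg p h
      have h0 : (toF p : Y × ℝ).2 = 0 := by
        rw [e1]; exact (p.2.resolve_right h).2
      have h2 : (toF p : Y × ℝ) ∉ D' := dcoll_notMem hD' h0
      apply Subtype.ext
      rw [invF_neg (toF p) h2, e1, hGF]
  have hright : Function.RightInverse invF toF := by
    intro q
    by_cases h : (q : Y × ℝ) ∈ D'
    · have e1 := invF_pos q h
      have h2 : (invF q : X × ℝ) ∈ D := by rw [e1]; exact (φ.symm ⟨_, h⟩).2
      apply Subtype.ext
      rw [toF_pos (invF q) h2]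
      have : (⟨(invF q : X × ℝ), h2⟩ : ↥D) = φ.symm ⟨(q : Y × ℝ), h⟩ := Subtype.ext e1
      rw [this, Equiv.apply_symm_apply]
    · have e1 := invF_neg q h
      have h0 : (invF q : X × ℝ).2 = 0 := by
        rw [e1]; exact (q.2.resolve_right h).2
      have h2 : (invF q : X × ℝ) ∉ D := dcoll_notMem hD h0
      apply Subtype.ext
      rw [toF_neg (invF q) h2, e1, hFG]
  have key : ∀ (x : ℕ → ↥(ISp X D)) (p : ↥(ISp X D)),
      Tendsto (fun n => (x n : X × ℝ)) atTop (𝓝 (p : X × ℝ)) →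
      Tendsto (fun n => (toF (x n) : Y × ℝ)) atTop (𝓝 (toF p : Y × ℝ)) := by
    intro x p hx
    by_cases hpD : (p : X × ℝ) ∈ D
    · -- p is isolated
      have hiso := hD.2.2.1 _ hpD
      have hempty : (∅ : Set (X × ℝ)) ∈ 𝓝[(xzero X ∪ D) \ {(p : X × ℝ)}] (p : X × ℝ) := by
        rw [hiso]; exact mem_bot
      obtain ⟨U, hUopen, hpU, hU⟩ := mem_nhdsWithin.1 hempty
      have hev : ∀ᶠ n in atTop, x n = p := by
        filter_upwards [hx.eventually (hUopen.mem_nhds hpU)] with n hn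
        by_contra hne
        have hne' : (x n : X × ℝ) ≠ (p : X × ℝ) := fun he => hne (Subtype.ext he)
        exact absurd (hU ⟨hn, (x n).2, hne'⟩) (Set.notMem_empty _)
      refine tendsto_const_nhds.congr' ?_
      filter_upwards [hev] with n hn
      rw [hn]
    · have hpx := p.2.resolve_right hpD
      have hval : (toF p : Y × ℝ) = Fm (p : X × ℝ) := toF_neg p hpD
      rw [hval]
      apply tendsto_of_subseq_tendsto
      intro ns hns
      by_cases hfreq : ∃ᶠ k in atTop, (x (ns k) : X × ℝ) ∈ D
      · obtain ⟨ms, hms, hmsD⟩ := extraction_of_frequently_atTop hfreq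
        set r : ℕ → X × ℝ := fun j => (x (ns (ms j)) : X × ℝ) with hrdef
        have hrD : ∀ j, r j ∈ D := hmsD
        have hr : Tendsto r atTop (𝓝 (p : X × ℝ)) :=
          hx.comp (hns.comp hms.tendsto_atTop)
        have hpcl : (p : X × ℝ) ∈ closure D :=
          mem_closure_of_tendsto hr (Eventually.of_forall hrD)
        have hpA0 : (p : X × ℝ) ∈ A0 := by
          rw [dcoll_closure hD] at hpcl
          exact hpcl.resolve_left hpD
        have hFmp : Fm (p : X × ℝ) ∈ B0 := himg ▸ Set.mem_image_of_mem Fm hpA0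
        set w : ℕ → Y × ℝ := fun j => (toF (x (ns (ms j))) : Y × ℝ) with hwdef
        have hwval : ∀ j, w j = ((φ ⟨r j, hrD j⟩ : ↥D') : Y × ℝ) := fun j =>
          toF_pos _ (hrD j)
        have hwD' : ∀ j, w j ∈ D' := fun j => by rw [hwval j]; exact (φ _).2
        have hwI : ∀ j, w j ∈ ISp Y D' := fun j => Or.inr (hwD' j)
        obtain ⟨q, hqI, ms', hms', hwq⟩ := (isCompact_ISp hD').tendsto_subseq hwI
        have hqD' : q ∉ D' := by
          intro hqD'
          have hiso := hD'.2.2.1 _ hqD'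
          have hempty : (∅ : Set (Y × ℝ)) ∈ 𝓝[(xzero Y ∪ D') \ {q}] q := by
            rw [hiso]; exact mem_bot
          obtain ⟨U, hUopen, hqU, hU⟩ := mem_nhdsWithin.1 hempty
          have hev : ∀ᶠ i in atTop, w (ms' i) = q := by
            filter_upwards [hwq.eventually (hUopen.mem_nhds hqU)] with i hi
            by_contra hne
            exact absurd (hU ⟨hi, Or.inr (hwD' (ms' i)), hne⟩) (Set.notMem_empty _)
          -- then r ∘ ms' is eventually the constant φ.symm ⟨q, _⟩
          set z : ↥D := φ.symm ⟨q, hqD'⟩ with hz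
          have hev2 : ∀ᶠ i in atTop, r (ms' i) = (z : X × ℝ) := by
            filter_upwards [hev] with i hi
            have : φ ⟨r (ms' i), hrD (ms' i)⟩ = ⟨q, hqD'⟩ := Subtype.ext (by
              rw [← hwval (ms' i), hi])
            have : (⟨r (ms' i), hrD (ms' i)⟩ : ↥D) = z := by rw [hz, ← this,
              Equiv.symm_apply_apply]
            exact congrArg Subtype.val this
          have hrq : Tendsto (fun i => r (ms' i)) atTop (𝓝 (p : X × ℝ)) :=
            hr.comp hms'.tendsto_atTop
          have hconst : Tendsto (fun _ : ℕ => (z : X × ℝ)) atTop (𝓝 (p : X × ℝ)) :=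
            Tendsto.congr' hev2 hrq
          have : (p : X × ℝ) = (z : X × ℝ) :=
            tendsto_nhds_unique hconst tendsto_const_nhds
          exact hpD (this ▸ z.2)
        have hqB0 : q ∈ B0 := by
          have hcl : q ∈ closure D' :=
            mem_closure_of_tendsto hwq (Eventually.of_forall fun i => hwD' (ms' i))
          rw [dcoll_closure hD'] at hcl
          exact hcl.resolve_left hqD'
        -- estimates
        have hrel : ∀ i, dist (Fm (r (ms' i))) (w (ms' i)) ≤
            2 * (infDist (Fm (r (ms' i))) B0 + infDist (w (ms' i)) B0) := by
          intro i
          have := hφ ⟨r (ms' i), hrD (ms' i)⟩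
          rw [hwval (ms' i)]
          exact this
        have hFr : Tendsto (fun i => Fm (r (ms' i))) atTop (𝓝 (Fm (p : X × ℝ))) :=
          (hFm.tendsto _).comp (hr.comp hms'.tendsto_atTop)
        have hs0 : Tendsto (fun i => infDist (Fm (r (ms' i))) B0) atTop (𝓝 0) := by
          have := (continuous_infDist_pt B0).tendsto (Fm (p : X × ℝ)) |>.comp hFr
          rwa [infDist_zero_of_mem hFmp] at this
        have ht0 : Tendsto (fun i => infDist (w (ms' i)) B0) atTop (𝓝 0) := by
          have := (continuous_infDist_pt B0).tendsto q |>.comp hwq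
          rwa [infDist_zero_of_mem hqB0] at this
        have hsum : Tendsto (fun i => 2 * (infDist (Fm (r (ms' i))) B0 +
            infDist (w (ms' i)) B0)) atTop (𝓝 0) := by
          have := (hs0.add ht0).const_mul (2:ℝ)
          simpa using this
        have hdist0 : Tendsto (fun i => dist (Fm (r (ms' i))) (w (ms' i))) atTop (𝓝 0) :=
          squeeze_zero (fun i => dist_nonneg) hrel hsum
        have hwlim : Tendsto (fun i => w (ms' i)) atTop (𝓝 (Fm (p : X × ℝ))) :=
          hFr.congr_dist hdist0
        exact ⟨fun n => ms (ms' n), hwlim⟩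
      · have hev : ∀ᶠ k in atTop, (x (ns k) : X × ℝ) ∉ D := not_frequently.1 hfreq
        refine ⟨id, ?_⟩
        have h1 : Tendsto (fun k => Fm ((x (ns k) : X × ℝ))) atTop (𝓝 (Fm (p : X × ℝ))) :=
          (hFm.tendsto _).comp (hx.comp hns)
        refine h1.congr' ?_
        filter_upwards [hev] with k hk
        exact (toF_neg _ hk).symm
  -- assemble the homeomorphism
  have hcs : CompactSpace ↥(ISp X D) := isCompact_iff_compactSpace.mp (isCompact_ISp hD)
  set E : ↥(ISp X D) ≃ ↥(ISp Y D') := ⟨toF, invF, hleft, hright⟩ with hE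
  have hcont : Continuous E := by
    rw [continuous_iff_seqContinuous]
    intro x p hx
    have := key x p (tendsto_subtype_rng.1 hx)
    exact tendsto_subtype_rng.2 this
  exact ⟨hcont.homeoOfEquivCompactToT2⟩
end Forward

section Reverse
variable {X Y : Type} [MetricSpace X] [CompactSpace X] [MetricSpace Y] [CompactSpace Y]

lemma reverse_dir {A : Set X} {B : Set Y} {D : Set (X × ℝ)} {D' : Set (Y × ℝ)}
    (hAiso : {x : X | 𝓝[≠] x = ⊥} ⊆ A) (hBiso : {y : Y | 𝓝[≠] y = ⊥} ⊆ B)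
    (hD : D ∈ Dcoll X A) (hD' : D' ∈ Dcoll Y B)
    (h : ↥(ISp X D) ≃ₜ ↥(ISp Y D')) : ∃ f : X ≃ₜ Y, f '' A = B := by
  classical
  set ιX : X → ↥(ISp X D) := fun x => ⟨(x, 0), Or.inl ⟨trivial, rfl⟩⟩ with hιX
  set ιY : Y → ↥(ISp Y D') := fun y => ⟨(y, 0), Or.inl ⟨trivial, rfl⟩⟩ with hιY
  have hcιX : Continuous ιX := Continuous.subtype_mk (continuous_id.prodMk continuous_const) _
  have hcιY : Continuous ιY := Continuous.subtype_mk (continuous_id.prodMk continuous_const) _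
  have hmap : ∀ p : ↥(ISp X D), (p : X × ℝ) ∈ D ↔ ((h p : Y × ℝ)) ∈ D' := by
    intro p
    rw [← dcoll_isolated_iff hD hAiso p, ← dcoll_isolated_iff hD' hBiso (h p)]
    constructor
    · intro hb
      have := h.map_punctured_nhds_eq p
      rw [hb, Filter.map_bot] at this
      exact this.symm
    · intro hb
      have := h.map_punctured_nhds_eq p
      rw [hb, Filter.map_eq_bot_iff] at this
      exact this
  have hXD : ∀ x : X, ((ιX x : X × ℝ)) ∉ D := fun x => dcoll_notMem hD rfl
  have hYD : ∀ y : Y, ((ιY y : Y × ℝ)) ∉ D' := fun y => dcoll_notMem hD' rfl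
  have hsnd : ∀ x : X, ((h (ιX x) : Y × ℝ)).2 = 0 := by
    intro x
    have : ((h (ιX x) : Y × ℝ)) ∉ D' := fun hc => hXD x ((hmap (ιX x)).2 hc)
    exact ((h (ιX x)).2.resolve_right this).2
  have hsnd' : ∀ y : Y, ((h.symm (ιY y) : X × ℝ)).2 = 0 := by
    intro y
    have h1 : ((h (h.symm (ιY y)) : Y × ℝ)) ∉ D' := by
      rw [h.apply_symm_apply]; exact hYD y
    have : ((h.symm (ιY y) : X × ℝ)) ∉ D := fun hc => h1 ((hmap _).1 hc)
    exact ((h.symm (ιY y)).2.resolve_right this).2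
  set f0 : X → Y := fun x => ((h (ιX x) : Y × ℝ)).1 with hf0
  set g0 : Y → X := fun y => ((h.symm (ιY y) : X × ℝ)).1 with hg0
  have hkey : ∀ x : X, ιY (f0 x) = h (ιX x) := fun x =>
    Subtype.ext (Prod.ext rfl (hsnd x).symm)
  have hkey' : ∀ y : Y, ιX (g0 y) = h.symm (ιY y) := fun y =>
    Subtype.ext (Prod.ext rfl (hsnd' y).symm)
  have hleft : Function.LeftInverse g0 f0 := by
    intro x
    have : ιX (g0 (f0 x)) = ιX x := by
      rw [hkey' (f0 x), hkey x, h.symm_apply_apply]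
    have := congrArg (fun p => ((p : ↥(ISp X D)) : X × ℝ).1) this
    exact this
  have hright : Function.RightInverse g0 f0 := by
    intro y
    have : ιY (f0 (g0 y)) = ιY y := by
      rw [hkey (g0 y), hkey' y, h.apply_symm_apply]
    have := congrArg (fun p => ((p : ↥(ISp Y D')) : Y × ℝ).1) this
    exact this
  have hcf0 : Continuous f0 :=
    continuous_fst.comp (continuous_subtype_val.comp (h.continuous.comp hcιX))
  have hcg0 : Continuous g0 :=
    continuous_fst.comp (continuous_subtype_val.comp (h.symm.continuous.comp hcιY))
  refine ⟨⟨⟨f0, g0, hleft, hright⟩, hcf0, hcg0⟩, ?_⟩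
  -- it remains to show f0 '' A = B
  have hDsub : D ⊆ ISp X D := fun q hq => Or.inr hq
  have hDsub' : D' ⊆ ISp Y D' := fun q hq => Or.inr hq
  have hclX : ∀ x : X, x ∈ A ↔ ((ιX x : X × ℝ)) ∈ closure D := by
    intro x
    constructor
    · intro ha; exact (dcoll_mem_closure hD ha).1
    · intro hc
      have : ((ιX x : X × ℝ)) ∈ closure D \ D := ⟨hc, hXD x⟩
      rw [hD.2.2.2] at this
      exact this.1
  have hclY : ∀ y : Y, y ∈ B ↔ ((ιY y : Y × ℝ)) ∈ closure D' := by
    intro y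
    constructor
    · intro hb; exact (dcoll_mem_closure hD' hb).1
    · intro hc
      have : ((ιY y : Y × ℝ)) ∈ closure D' \ D' := ⟨hc, hYD y⟩
      rw [hD'.2.2.2] at this
      exact this.1
  -- closure membership transfers through h
  have htrans : ∀ x : X, ((ιX x : X × ℝ)) ∈ closure D ↔ ((ιY (f0 x) : Y × ℝ)) ∈ closure D' := by
    intro x
    rw [mem_closure_iff_nhdsWithin_neBot, mem_closure_iff_nhdsWithin_neBot]
    have e1 : 𝓝[D] ((ιX x : X × ℝ)) ⊓ 𝓟 (ISp X D) = 𝓝[D] ((ιX x : X × ℝ)) :=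
      inf_eq_left.2 (le_trans inf_le_right (principal_mono.2 hDsub))
    have e1' : 𝓝[D'] ((ιY (f0 x) : Y × ℝ)) ⊓ 𝓟 (ISp Y D') = 𝓝[D'] ((ιY (f0 x) : Y × ℝ)) :=
      inf_eq_left.2 (le_trans inf_le_right (principal_mono.2 hDsub'))
    have b1 : 𝓝[Subtype.val ⁻¹' D] (ιX x) = ⊥ ↔ 𝓝[D] ((ιX x : X × ℝ)) = ⊥ := by
      rw [nhdsWithin_subtype_eq_bot_iff, e1]
    have b1' : 𝓝[Subtype.val ⁻¹' D'] (ιY (f0 x)) = ⊥ ↔ 𝓝[D'] ((ιY (f0 x) : Y × ℝ)) = ⊥ := by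
      rw [nhdsWithin_subtype_eq_bot_iff, e1']
    have himg : h '' (Subtype.val ⁻¹' D) = Subtype.val ⁻¹' D' := by
      ext q
      constructor
      · rintro ⟨p, hp, rfl⟩
        exact (hmap p).1 hp
      · intro hq
        exact ⟨h.symm q, by
          have := (hmap (h.symm q))
          rw [h.apply_symm_apply] at this
          exact this.2 hq, h.apply_symm_apply q⟩
    have hmapnhds : map h (𝓝[Subtype.val ⁻¹' D] (ιX x)) =
        𝓝[Subtype.val ⁻¹' D'] (h (ιX x)) := by
      rw [h.isEmbedding.map_nhdsWithin_eq, himg]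
    rw [neBot_iff, neBot_iff, not_iff_not, ← b1, ← b1', hkey x, ← hmapnhds,
      Filter.map_eq_bot_iff]
  ext y
  constructor
  · rintro ⟨x, hx, rfl⟩
    exact (hclY (f0 x)).2 ((htrans x).1 ((hclX x).1 hx))
  · intro hy
    refine ⟨g0 y, ?_, hright y⟩
    have := (hclY y).1 hy
    rw [← hright y] at this
    exact (hclX (g0 y)).2 ((htrans (g0 y)).2 this)
end Reverse


theorem stmt5 {X Y : Type} [MetricSpace X] [CompactSpace X] [MetricSpace Y] [CompactSpace Y]
    (A : Set X) (B : Set Y) (hAne : A.Nonempty) (hBne : B.Nonempty)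
    (hAcl : IsClosed A) (hBcl : IsClosed B)
    (hAiso : {x : X | 𝓝[≠] x = ⊥} ⊆ A) (hBiso : {y : Y | 𝓝[≠] y = ⊥} ⊆ B)
    (D : Set (X × ℝ)) (D' : Set (Y × ℝ)) (hD : D ∈ Dcoll X A) (hD' : D' ∈ Dcoll Y B) :
    (∃ f : X ≃ₜ Y, f '' A = B) ↔ Nonempty (↥(ISp X D) ≃ₜ ↥(ISp Y D')) := by
  constructor
  · rintro ⟨f, hf⟩
    exact forward_dir hAne hBne hBcl hD hD' f hf
  · rintro ⟨h⟩
    exact reverse_dir hAiso hBiso hD hD' h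
end

section
/- Let X be a continuum without cut-points and S_1 ⊆ … ⊆ S_k an increasing sequence of closed subsets of X with S_k ≠ ∅. Then J(X,S⃗) − {x*} has infinitely many connected components, while for every point z ∈ J(X,S⃗) with z ≠ x*, the space J(X,S⃗) − {z} has at most two connected components. In particular, x* is the unique point of J(X,S⃗) whose removal leaves infinitely many connected components. -/
open Topology

/-- The set of isolated points of the subspace `S` (computed in the ambient space `W`). -/
def isoPts {W : Type*} [TopologicalSpace W] (S : Set W) : Set W :=
  {p | p ∈ S ∧ 𝓝[S \ {p}] p = ⊥}

/-- The canonical embedding of `X` into the ambient space `X × ℝ^ℕ`. -/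
def embW {X : Type*} (x : X) : X × (ℕ → ℝ) := (x, fun _ => 0)

/-- The canonical copy of `X` inside `X × ℝ^ℕ`. -/
def baseW (X : Type*) : Set (X × (ℕ → ℝ)) := {w | w.2 = fun _ => 0}

/-- Place the value `t` in coordinate `j`. -/
def addC {X : Type*} (j : ℕ) (t : ℝ) (w : X × (ℕ → ℝ)) : X × (ℕ → ℝ) :=
  (w.1, Function.update w.2 j t)

/-- `Z'` is a copy of `I(Z, B; D)` for some admissible `D`, realized using coordinate `j`:
`Z' = Z ∪ D` where `D` is a nonempty set of points `addC j t z` (`z ∈ Z`, `t ∈ (0,1]`),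
each of which is isolated in `Z'`, with `cl(D) − D = B`; by convention `D` is a single point
when `B = ∅`. -/
def IsIStep {X : Type*} [TopologicalSpace X] (j : ℕ)
    (Z B Z' : Set (X × (ℕ → ℝ))) : Prop :=
  ∃ D : Set (X × (ℕ → ℝ)),
    Z' = Z ∪ D ∧ D.Nonempty ∧
    (∀ p ∈ D, ∃ z ∈ Z, ∃ t ∈ Set.Ioc (0 : ℝ) 1, p = addC j t z) ∧
    (∀ p ∈ D, 𝓝[Z' \ {p}] p = ⊥) ∧
    closure D \ D = B ∧
    (B = ∅ → D.Subsingleton)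

/-- The iterated construction: `IsITowerFrom j Z As Z'` says that `Z'` is obtained from `Z`
by successively applying the `I(·, D_k ∪ A_{k+1})` construction along the list `As`,
where `D_k` is the current set of isolated points. -/
def IsITowerFrom {X : Type*} [TopologicalSpace X] :
    ℕ → Set (X × (ℕ → ℝ)) → List (Set X) → Set (X × (ℕ → ℝ)) → Prop
  | _, Z, [], Z' => Z' = Z
  | j, Z, A :: rest, Z' =>
      ∃ Zm, IsIStep j Z (isoPts Z ∪ (embW '' A)) Zm ∧ IsITowerFrom (j + 1) Zm rest Z'

/-- `Z` is a model of `I_n(X, A_1, …, A_n)` where `As = [A_1, …, A_n]`. -/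
def IsIModel {X : Type*} [TopologicalSpace X] (As : List (Set X))
    (Z : Set (X × (ℕ → ℝ))) : Prop :=
  IsITowerFrom 0 (baseW X) As Z


/-- The underlying set of `F(Z,B)`: the subspace `Z×{0} ∪ B×[0,1]` of `Z × [0,1]`. -/
abbrev FPts (Z : Type*) (B : Set Z) := {p : Z × unitInterval // p.2 = 0 ∨ p.1 ∈ B}

/-- The relation identifying all points of `B × {1}` to one point. -/
def FRel {Z : Type*} {B : Set Z} (p q : FPts Z B) : Prop :=
  p = q ∨ (p.val.2 = 1 ∧ q.val.2 = 1)

/-- The space `F(Z,B)`: the quotient of `Z×{0} ∪ B×[0,1]` collapsing `B × {1}` to a point. -/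
abbrev FSp (Z : Type*) [TopologicalSpace Z] (B : Set Z) := Quot (@FRel Z B)

/-- The closure of the set `D_X` of added points, viewed inside the subspace `Z`. -/
def JB {X : Type*} [TopologicalSpace X] (Z : Set (X × (ℕ → ℝ))) : Set ↥Z :=
  {z | (z : X × (ℕ → ℝ)) ∈ closure (Z \ baseW X)}

/-- The space `J(X, S⃗) = F(I(X,S⃗), cl(D_X))`, for `Z` a model of `I(X,S⃗)`. -/
abbrev JSp {X : Type*} [TopologicalSpace X] (Z : Set (X × (ℕ → ℝ))) :=
  FSp (↥Z) (JB Z)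

/-- The point of `J(X,S⃗)` determined by a representative. -/
def JPt {X : Type*} [TopologicalSpace X] (Z : Set (X × (ℕ → ℝ)))
    (p : FPts (↥Z) (JB Z)) : JSp Z := Quot.mk FRel p

/-!
Removing the apex `x*` of `J(X, S⃗)` leaves, for each isolated point `d` of `I(X, S⃗)`, the
clopen piece `{d} × [0, 1)`; there are infinitely many such `d`, because the nonempty set `S_k`
lies in `cl(D) − D` for the set `D` of points added last.

Removing any other point `q` leaves the union of three connected sets: the cone over `cl(D_X)`
without the segment of the whisker through `q` up to `q` (all whiskers meet at the apex), the copy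
of `X` (connected even without one point, since `X` has no cut points), and the segment of the
whisker through `q` below `q`. If `q` lies over `X`, the last one hangs from the copy of `X`;
otherwise the copy of `X` meets the cone over a point of `S_k`. Either way at most two components
remain.
-/

open Set Function

theorem exists_connectedComponentIn_eq_of_isPreconnected {α : Type*} [TopologicalSpace α]
    {F A : Set α} (hA : IsPreconnected A) (hAF : A ⊆ F) :
    ∃ C : Set α, ∀ x ∈ A, connectedComponentIn F x = C := by
  rcases A.eq_empty_or_nonempty with rfl | ⟨a, ha⟩
  · exact ⟨∅, by simp⟩
  · exact ⟨connectedComponentIn F a,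
      fun x hx => connectedComponentIn_eq (hA.subset_connectedComponentIn hx hAF ha)⟩

theorem exists_two_connectedComponentIn_of_subset_union {α : Type*} [TopologicalSpace α]
    {F A B : Set α} (hA : IsPreconnected A) (hB : IsPreconnected B) (hAF : A ⊆ F) (hBF : B ⊆ F)
    (hF : F ⊆ A ∪ B) :
    ∃ C₁ C₂ : Set α, ∀ x ∈ F, connectedComponentIn F x = C₁ ∨ connectedComponentIn F x = C₂ := by
  obtain ⟨C₁, hC₁⟩ := exists_connectedComponentIn_eq_of_isPreconnected hA hAF
  obtain ⟨C₂, hC₂⟩ := exists_connectedComponentIn_eq_of_isPreconnected hB hBF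
  exact ⟨C₁, C₂, fun x hx => (hF hx).imp (hC₁ x) (hC₂ x)⟩

theorem isPreconnected_compl_of_subsingleton {X : Type*} [TopologicalSpace X] [ConnectedSpace X]
    (hX : ∀ x : X, IsPreconnected ({x}ᶜ : Set X)) {s : Set X} (hs : s.Subsingleton) :
    IsPreconnected sᶜ := by
  rcases hs.eq_empty_or_singleton with rfl | ⟨x, rfl⟩
  · simpa using isPreconnected_univ
  · exact hX x

theorem isOpen_singleton_of_nhdsWithin_diff_eq_bot {α : Type*} [TopologicalSpace α] {Z : Set α}
    {p : Z} (h : 𝓝[Z \ {p.1}] p.1 = ⊥) : IsOpen ({p} : Set Z) := by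
  rw [isOpen_singleton_iff_punctured_nhds, ← Filter.map_eq_bot_iff,
    IsEmbedding.subtypeVal.map_nhdsWithin_eq, image_val_compl, image_singleton]
  exact h

namespace FSp

variable {Y : Type*} {B : Set Y}

theorem frel_equivalence : Equivalence (@FRel Y B) where
  refl _ := Or.inl rfl
  symm
    | Or.inl h => Or.inl h.symm
    | Or.inr h => Or.inr ⟨h.2, h.1⟩
  trans
    | Or.inl h, h' => h ▸ h'
    | h, Or.inl h' => h' ▸ h
    | Or.inr h, Or.inr h' => Or.inr ⟨h.1, h'.2⟩

theorem mk_eq_mk_iff {p p' : FPts Y B} :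
    Quot.mk FRel p = Quot.mk FRel p' ↔ p = p' ∨ (p.val.2 = 1 ∧ p'.val.2 = 1) :=
  Quot.eq.trans (Equivalence.eqvGen_iff frel_equivalence)

theorem eq_of_mk_eq_mk {p p' : FPts Y B} (h : Quot.mk FRel p = Quot.mk FRel p')
    (hp : p.val.2 ≠ 1) : p = p' :=
  (mk_eq_mk_iff.1 h).resolve_right fun h' => hp h'.1

variable [TopologicalSpace Y]

def IsApex (q : FSp Y B) : Prop :=
  ∃ p : FPts Y B, Quot.mk FRel p = q ∧ p.val.2 = 1

def bottom (y : Y) : FSp Y B :=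
  Quot.mk FRel ⟨(y, 0), Or.inl rfl⟩

theorem continuous_bottom : Continuous (bottom : Y → FSp Y B) :=
  continuous_quot_mk.comp ((continuous_id.prodMk continuous_const).subtype_mk _)

theorem bottom_injective : Injective (bottom : Y → FSp Y B) := fun _ _ h =>
  congrArg (fun p : FPts Y B => p.val.1) (eq_of_mk_eq_mk h zero_ne_one)

theorem bottom_ne_of_isApex {q : FSp Y B} (hq : IsApex q) (y : Y) : bottom y ≠ q := by
  obtain ⟨p, rfl, hp⟩ := hq
  intro h
  exact zero_ne_one (congrArg (fun p : FPts Y B => p.val.2) (eq_of_mk_eq_mk h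
    zero_ne_one) |>.trans hp)

noncomputable def whisker (w : B) (s : ℝ) : FSp Y B :=
  Quot.mk FRel ⟨(w, projIcc 0 1 zero_le_one s), Or.inr w.2⟩

theorem continuous_whisker (w : B) : Continuous (whisker w : ℝ → FSp Y B) :=
  continuous_quot_mk.comp ((continuous_const.prodMk continuous_projIcc).subtype_mk _)

theorem whisker_coe (w : B) (s : unitInterval) :
    whisker w s = Quot.mk FRel ⟨((w : Y), s), Or.inr w.2⟩ := by
  simp [whisker]

section Apex

def fibre (y : Y) : Set (FSp Y B) :=
  Quot.mk FRel '' {p | p.val.1 = y ∧ p.val.2 ≠ 1}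

theorem preimage_fibre (y : Y) :
    Quot.mk FRel ⁻¹' fibre y = {p : FPts Y B | p.val.1 = y ∧ p.val.2 ≠ 1} := by
  ext p
  refine ⟨fun ⟨p', hp', h⟩ => ?_, fun hp => ⟨p, hp, rfl⟩⟩
  exact eq_of_mk_eq_mk h hp'.2 ▸ hp'

theorem isOpen_fibre {y : Y} (hy : IsOpen {y}) : IsOpen (fibre y : Set (FSp Y B)) := by
  rw [← isQuotientMap_quot_mk.isOpen_preimage, preimage_fibre]
  exact ((hy.preimage continuous_fst).inter (isOpen_ne.preimage continuous_snd)).preimage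
    continuous_subtype_val

theorem isClosed_fibre_union [T1Space Y] {q : FSp Y B} (hq : IsApex q) (y : Y) :
    IsClosed (fibre y ∪ {q}) := by
  obtain ⟨p₁, rfl, hp₁⟩ := hq
  have hpre : Quot.mk FRel ⁻¹' (fibre y ∪ {Quot.mk FRel p₁}) =
      {p : FPts Y B | p.val.1 = y} ∪ {p | p.val.2 = 1} := by
    ext p
    rw [preimage_union, preimage_fibre]
    by_cases h : p.val.2 = 1
    · simp [h, mk_eq_mk_iff, hp₁]
    · simp only [mem_union, mem_ofPred_eq, mem_preimage, mem_singleton_iff, mk_eq_mk_iff, h,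
        false_and, or_false, ne_eq, not_false_eq_true, and_true]
      exact or_iff_left fun h' => h (h' ▸ hp₁)
  rw [← isQuotientMap_quot_mk.isClosed_preimage, hpre]
  exact ((isClosed_singleton.preimage continuous_fst).union
    (isClosed_singleton.preimage continuous_snd)).preimage continuous_subtype_val

theorem connectedComponentIn_compl_subset_fibre [T1Space Y] {q : FSp Y B} (hq : IsApex q) {y : Y}
    (hy : IsOpen {y}) : connectedComponentIn {q}ᶜ (bottom y) ⊆ fibre y := by
  have hbot : (bottom y : FSp Y B) ∈ fibre y := ⟨⟨(y, 0), Or.inl rfl⟩, ⟨rfl, zero_ne_one⟩, rfl⟩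
  refine isPreconnected_connectedComponentIn.subset_left_of_subset_union (isOpen_fibre hy)
    (isClosed_fibre_union hq y).isOpen_compl ?_ ?_
    ⟨bottom y, mem_connectedComponentIn (bottom_ne_of_isApex hq y), hbot⟩
  · exact disjoint_compl_right.mono_right (compl_subset_compl.2 subset_union_left)
  · intro x hx
    by_cases h : x ∈ fibre y
    · exact Or.inl h
    · exact Or.inr fun h' => h'.elim h (connectedComponentIn_subset _ _ hx)

theorem infinite_connectedComponentIn_compl_of_isApex [T1Space Y] {q : FSp Y B} (hq : IsApex q)
    (hiso : {y : Y | IsOpen {y}}.Infinite) :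
    (connectedComponentIn {q}ᶜ '' ({q}ᶜ : Set (FSp Y B))).Infinite := by
  refine infinite_of_injOn_mapsTo (f := fun y => connectedComponentIn {q}ᶜ (bottom y))
    (fun y hy y' _ h => ?_) (fun y _ => ⟨_, bottom_ne_of_isApex hq y, rfl⟩) hiso
  simp only at h
  have hy' : bottom y' ∈ fibre y := connectedComponentIn_compl_subset_fibre hq hy
    (h ▸ mem_connectedComponentIn (bottom_ne_of_isApex hq y'))
  obtain ⟨p, hp, hpy⟩ := hy'
  exact hp.1.symm.trans (congrArg (fun p : FPts Y B => p.val.1) (eq_of_mk_eq_mk hpy hp.2))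

end Apex

section NotApex

theorem eq_of_whisker_eq_mk {w : B} {s : ℝ} (hs : s ∈ Icc 0 1) {p : FPts Y B} (hp : p.val.2 ≠ 1)
    (h : whisker w s = Quot.mk FRel p) : (w : Y) = p.val.1 ∧ s = p.val.2 := by
  obtain rfl := eq_of_mk_eq_mk h.symm hp
  simp [projIcc_of_mem _ hs]

def upperCone (w₀ : Y) (t : ℝ) : Set (FSp Y B) :=
  ⋃ w : B, whisker w '' {s ∈ Icc 0 1 | (w : Y) = w₀ → t < s}

def lowerWhisker (w₀ : Y) (t : ℝ) : Set (FSp Y B) :=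
  ⋃ hw : w₀ ∈ B, whisker ⟨w₀, hw⟩ '' Ico 0 t

theorem isPreconnected_upperCone {w₀ : Y} {t : ℝ} (ht : t < 1) :
    IsPreconnected (upperCone w₀ t : Set (FSp Y B)) := by
  rcases isEmpty_or_nonempty B with hB | ⟨⟨w₁⟩⟩
  · simp [upperCone, isPreconnected_empty]
  refine isPreconnected_iUnion ⟨whisker w₁ 1, mem_iInter.2 fun w => ?_⟩ fun w => ?_
  · refine ⟨1, ⟨right_mem_Icc.2 zero_le_one, fun _ => ht⟩, Quot.sound (Or.inr ?_)⟩
    simp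
  · refine IsPreconnected.image (OrdConnected.isPreconnected ⟨fun a ha b hb x hx => ?_⟩) _
      (continuous_whisker w).continuousOn
    exact ⟨⟨ha.1.1.trans hx.1, hx.2.trans hb.1.2⟩, fun hw => (ha.2 hw).trans_le hx.1⟩

theorem isPreconnected_lowerWhisker {w₀ : Y} {t : ℝ} :
    IsPreconnected (lowerWhisker w₀ t : Set (FSp Y B)) := by
  by_cases hw : w₀ ∈ B
  · simpa [lowerWhisker, hw] using
      isPreconnected_Ico.image _ (continuous_whisker ⟨w₀, hw⟩).continuousOn
  · simp [lowerWhisker, hw, isPreconnected_empty]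

theorem mk_mem_upperCone {w₀ w : Y} {t : ℝ} {s : unitInterval} {hp : s = 0 ∨ w ∈ B} (hw : w ∈ B)
    (h : w = w₀ → t < s) : Quot.mk FRel ⟨(w, s), hp⟩ ∈ upperCone w₀ t :=
  mem_iUnion.2 ⟨⟨w, hw⟩, s, ⟨s.2, h⟩, whisker_coe _ _⟩

theorem mk_mem_lowerWhisker {w₀ : Y} {t : ℝ} {s : unitInterval} {hp : s = 0 ∨ w₀ ∈ B}
    (hw : w₀ ∈ B) (hs : (s : ℝ) < t) : Quot.mk FRel ⟨(w₀, s), hp⟩ ∈ lowerWhisker w₀ t :=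
  mem_iUnion.2 ⟨hw, s, ⟨s.2.1, hs⟩, whisker_coe _ _⟩

variable {w₀ : Y} {t : unitInterval} (hp : t = 0 ∨ w₀ ∈ B)
include hp

theorem upperCone_subset_compl (ht : t ≠ 1) :
    upperCone w₀ t ⊆ {Quot.mk FRel ⟨(w₀, t), hp⟩}ᶜ := by
  simp only [upperCone, iUnion_subset_iff, image_subset_iff]
  intro w s ⟨hs, hst⟩ h
  obtain ⟨hw, rfl⟩ := eq_of_whisker_eq_mk hs ht h
  exact (hst hw).false

theorem lowerWhisker_subset_compl (ht : t ≠ 1) :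
    lowerWhisker w₀ t ⊆ {Quot.mk FRel ⟨(w₀, t), hp⟩}ᶜ := by
  simp only [lowerWhisker, iUnion_subset_iff, image_subset_iff]
  intro hw s hs h
  exact hs.2.ne (eq_of_whisker_eq_mk ⟨hs.1, hs.2.le.trans t.2.2⟩ ht h).2

theorem compl_subset_upperCone_union {X : Type*} {e : X → Y} (hB : ∀ y ∉ B, y ∈ range e) :
    {Quot.mk FRel ⟨(w₀, t), hp⟩}ᶜ ⊆ upperCone w₀ t ∪
      (fun x => bottom (e x)) '' {x | bottom (e x) ≠ Quot.mk FRel ⟨(w₀, t), hp⟩} ∪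
      lowerWhisker w₀ t := by
  rintro ⟨⟨⟨w, s⟩, hp'⟩⟩ hy
  by_cases hw : w ∈ B
  · by_cases hlow : w = w₀ ∧ (s : ℝ) < t
    · obtain ⟨rfl, hs⟩ := hlow
      exact Or.inr (mk_mem_lowerWhisker hw hs)
    · refine Or.inl (Or.inl (mk_mem_upperCone hw fun hww => ?_))
      subst hww
      refine (not_lt.1 fun h => hlow ⟨rfl, h⟩).lt_of_ne fun hts => ?_
      obtain rfl : t = s := Subtype.ext hts
      exact hy rfl
  · obtain ⟨x, rfl⟩ := hB w hw
    obtain rfl : s = 0 := hp'.resolve_right hw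
    exact Or.inl (Or.inr ⟨x, hy, rfl⟩)

theorem bottom_ne_mk {y : Y} (h : y ≠ w₀ ∨ t ≠ 0) :
    bottom y ≠ Quot.mk FRel ⟨(w₀, t), hp⟩ := fun h' => by
  have := congrArg Subtype.val (eq_of_mk_eq_mk h' zero_ne_one)
  simp only [Prod.mk.injEq] at this
  exact h.elim (· this.1) (· this.2.symm)

end NotApex

theorem exists_two_connectedComponentIn_compl {X : Type*} [TopologicalSpace X] [ConnectedSpace X]
    (hX : ∀ x : X, IsPreconnected ({x}ᶜ : Set X)) {e : X → Y} (he : Continuous e)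
    (he' : Injective e) (hB : ∀ y ∉ B, y ∈ range e) {x₁ : X} (hx₁ : e x₁ ∈ B)
    {q : FSp Y B} (hq : ¬ IsApex q) :
    ∃ C₁ C₂ : Set (FSp Y B), ∀ x ∈ ({q}ᶜ : Set (FSp Y B)),
      connectedComponentIn {q}ᶜ x = C₁ ∨ connectedComponentIn {q}ᶜ x = C₂ := by
  obtain ⟨⟨⟨w₀, t⟩, hp⟩, rfl⟩ := Quot.exists_rep q
  have ht : t ≠ 1 := fun h => hq ⟨_, rfl, h⟩
  set E : Set (FSp Y B) :=
    (fun x => bottom (e x)) '' {x | bottom (e x) ≠ Quot.mk FRel ⟨(w₀, t), hp⟩}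
  have hE : IsPreconnected E :=
    (isPreconnected_compl_of_subsingleton hX fun x hx x' hx' =>
      he' (bottom_injective (hx.trans hx'.symm))).image _ (continuous_bottom.comp he).continuousOn
  have hEq : E ⊆ {Quot.mk FRel ⟨(w₀, t), hp⟩}ᶜ := by
    rintro _ ⟨x, hx, rfl⟩
    exact hx
  have hA := isPreconnected_upperCone (B := B) (w₀ := w₀)
    (t.2.2.lt_of_ne (unitInterval.coe_ne_one.2 ht))
  have hcov := compl_subset_upperCone_union hp hB
  by_cases hw₀ : w₀ ∈ range e
  · obtain ⟨x, rfl⟩ := hw₀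
    have hEL : IsPreconnected (E ∪ lowerWhisker (e x) t) := by
      rcases eq_or_ne t 0 with rfl | ht0
      · simpa [lowerWhisker] using hE
      · refine hE.union (bottom (e x)) ⟨x, bottom_ne_mk hp (Or.inr ht0), rfl⟩
          (mk_mem_lowerWhisker (hp.resolve_left ht0) ?_) isPreconnected_lowerWhisker
        exact t.2.1.lt_of_ne (unitInterval.coe_ne_zero.2 ht0).symm
    rw [union_assoc] at hcov
    exact exists_two_connectedComponentIn_of_subset_union hA hEL (upperCone_subset_compl hp ht)
      (union_subset hEq (lowerWhisker_subset_compl hp ht)) hcov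
  · have hx₁A : bottom (e x₁) ∈ upperCone w₀ t :=
      mk_mem_upperCone hx₁ fun h => (hw₀ ⟨x₁, h⟩).elim
    have hAE : IsPreconnected (upperCone w₀ t ∪ E) :=
      hA.union _ hx₁A ⟨x₁, bottom_ne_mk hp (Or.inl fun h => hw₀ ⟨x₁, h⟩), rfl⟩ hE
    exact exists_two_connectedComponentIn_of_subset_union hAE isPreconnected_lowerWhisker
      (union_subset (upperCone_subset_compl hp ht) hEq) (lowerWhisker_subset_compl hp ht) hcov

end FSp

theorem addC_notMem_baseW {X : Type*} {j : ℕ} {t : ℝ} (ht : 0 < t) (z : X × (ℕ → ℝ)) :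
    addC j t z ∉ baseW X := fun h => ht.ne' (by simpa [addC] using congrFun h j)

section Tower

variable {X : Type*} [TopologicalSpace X]

theorem IsITowerFrom.subset : ∀ {L : List (Set X)} {j : ℕ} {Z₀ Z : Set (X × (ℕ → ℝ))},
    IsITowerFrom j Z₀ L Z → Z₀ ⊆ Z
  | [], _, _, _, h => h.ge
  | _ :: _, _, _, _, ⟨_, ⟨_, hZm, _⟩, h⟩ => (hZm ▸ subset_union_left).trans h.subset

theorem IsITowerFrom.exists_isIStep_of_append_singleton :
    ∀ {L : List (Set X)} {A : Set X} {j : ℕ} {Z₀ Z : Set (X × (ℕ → ℝ))},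
      IsITowerFrom j Z₀ (L ++ [A]) Z → ∃ j' Zp, IsIStep j' Zp (isoPts Zp ∪ embW '' A) Z
  | [], _, j, Z₀, _, ⟨_, h, rfl⟩ => ⟨j, Z₀, h⟩
  | _ :: _, _, _, _, _, ⟨_, _, h⟩ => h.exists_isIStep_of_append_singleton

theorem IsIStep.exists_isolated {j : ℕ} {Z₀ B Z : Set (X × (ℕ → ℝ))} (h : IsIStep j Z₀ B Z) :
    ∃ D ⊆ Z \ baseW X, (∀ p ∈ D, 𝓝[Z \ {p}] p = ⊥) ∧ B ⊆ closure D := by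
  obtain ⟨D, rfl, -, hform, hiso, hcl, -⟩ := h
  refine ⟨D, fun p hp => ⟨Or.inr hp, ?_⟩, hiso, hcl ▸ sdiff_subset⟩
  obtain ⟨z, -, s, hs, rfl⟩ := hform p hp
  exact addC_notMem_baseW hs.1 z

theorem IsIModel.exists_isolated {k : ℕ} {S : Fin (k + 1) → Set X} {Z : Set (X × (ℕ → ℝ))}
    (hZ : IsIModel (List.ofFn S) Z) :
    ∃ D ⊆ Z \ baseW X, (∀ p ∈ D, 𝓝[Z \ {p}] p = ⊥) ∧ embW '' S (Fin.last k) ⊆ closure D := by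
  rw [IsIModel, List.ofFn_succ', List.concat_eq_append] at hZ
  obtain ⟨j, Zp, hstep⟩ := hZ.exists_isIStep_of_append_singleton
  obtain ⟨D, hD, hiso, hcl⟩ := hstep.exists_isolated
  exact ⟨D, hD, hiso, subset_union_right.trans hcl⟩

theorem mem_baseW_of_notMem_JB {Z : Set (X × (ℕ → ℝ))} {w : Z} (hw : w ∉ JB Z) :
    (w : X × (ℕ → ℝ)) ∈ baseW X :=
  by_contra fun h => hw (subset_closure ⟨w.2, h⟩)

end Tower

theorem infinite_isOpen_singleton_of_isolated {α : Type*} [TopologicalSpace α] [T1Space α]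
    {Z D : Set α} {a : α} (hDZ : D ⊆ Z) (hiso : ∀ p ∈ D, 𝓝[Z \ {p}] p = ⊥)
    (ha : a ∈ closure D \ D) : {y : Z | IsOpen {y}}.Infinite := by
  have hD : D.Infinite := fun hfin => ha.2 (hfin.isClosed.closure_subset ha.1)
  refine Infinite.of_image Subtype.val (hD.mono fun p hp => ?_)
  exact ⟨⟨p, hDZ hp⟩, isOpen_singleton_of_nhdsWithin_diff_eq_bot (hiso p hp), rfl⟩

theorem stmt15_general {X : Type} [MetricSpace X] [ConnectedSpace X]
    (hXnc : ∀ x : X, IsPreconnected ({x}ᶜ : Set X))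
    {k : ℕ} (S : Fin (k + 1) → Set X)
    (hSne : S (Fin.last k) ≠ ∅)
    (Z : Set (X × (ℕ → ℝ))) (hZ : IsIModel (List.ofFn S) Z) :
    (∀ q : JSp Z, (∃ p : FPts (↥Z) (JB Z), JPt Z p = q ∧ p.val.2 = 1) →
       Set.Infinite (connectedComponentIn ({q}ᶜ : Set (JSp Z)) '' ({q}ᶜ : Set (JSp Z)))) ∧
    (∀ q : JSp Z, ¬ (∃ p : FPts (↥Z) (JB Z), JPt Z p = q ∧ p.val.2 = 1) →
       ∃ C1 C2 : Set (JSp Z), ∀ x ∈ ({q}ᶜ : Set (JSp Z)),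
         connectedComponentIn ({q}ᶜ : Set (JSp Z)) x = C1 ∨
         connectedComponentIn ({q}ᶜ : Set (JSp Z)) x = C2) ∧
    (∀ q : JSp Z,
       Set.Infinite (connectedComponentIn ({q}ᶜ : Set (JSp Z)) '' ({q}ᶜ : Set (JSp Z))) ↔
       (∃ p : FPts (↥Z) (JB Z), JPt Z p = q ∧ p.val.2 = 1)) := by
  have hb : baseW X ⊆ Z := IsITowerFrom.subset hZ
  obtain ⟨D, hD, hiso, hcl⟩ := hZ.exists_isolated
  obtain ⟨x₁, hx₁⟩ := nonempty_iff_ne_empty.2 hSne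
  have hx₁D : embW x₁ ∈ closure D := hcl (mem_image_of_mem _ hx₁)
  have hapex (q : JSp Z) (hq : FSp.IsApex q) :=
    FSp.infinite_connectedComponentIn_compl_of_isApex hq (infinite_isOpen_singleton_of_isolated
      (fun p hp => (hD hp).1) hiso ⟨hx₁D, fun h => (hD h).2 rfl⟩)
  have hnotApex (q : JSp Z) (hq : ¬ FSp.IsApex q) :=
    FSp.exists_two_connectedComponentIn_compl hXnc (e := fun x => (⟨embW x, hb rfl⟩ : Z))
      (by unfold embW; fun_prop) (fun x y h => congrArg (fun w : Z => w.1.1) h)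
      (fun w hw => ⟨w.1.1, Subtype.ext (Prod.ext rfl (mem_baseW_of_notMem_JB hw).symm)⟩)
      (x₁ := x₁) (closure_mono hD hx₁D) hq
  refine ⟨hapex, hnotApex, fun q => ⟨fun hinf => by_contra fun hq => hinf ?_, hapex q⟩⟩
  obtain ⟨C₁, C₂, hC⟩ := hnotApex q hq
  exact ((finite_singleton C₂).insert C₁).subset (image_subset_iff.2 hC)

theorem stmt15 {X : Type} [MetricSpace X] [CompactSpace X] [ConnectedSpace X]
    (hXnc : ∀ x : X, IsPreconnected ({x}ᶜ : Set X))
    {k : ℕ} (S : Fin (k + 1) → Set X)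
    (hScl : ∀ i, IsClosed (S i)) (hSmono : Monotone S) (hSne : S (Fin.last k) ≠ ∅)
    (Z : Set (X × (ℕ → ℝ))) (hZ : IsIModel (List.ofFn S) Z) :
    (∀ q : JSp Z, (∃ p : FPts (↥Z) (JB Z), JPt Z p = q ∧ p.val.2 = 1) →
       Set.Infinite (connectedComponentIn ({q}ᶜ : Set (JSp Z)) '' ({q}ᶜ : Set (JSp Z)))) ∧
    (∀ q : JSp Z, ¬ (∃ p : FPts (↥Z) (JB Z), JPt Z p = q ∧ p.val.2 = 1) →
       ∃ C1 C2 : Set (JSp Z), ∀ x ∈ ({q}ᶜ : Set (JSp Z)),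
         connectedComponentIn ({q}ᶜ : Set (JSp Z)) x = C1 ∨
         connectedComponentIn ({q}ᶜ : Set (JSp Z)) x = C2) ∧
    (∀ q : JSp Z,
       Set.Infinite (connectedComponentIn ({q}ᶜ : Set (JSp Z)) '' ({q}ᶜ : Set (JSp Z))) ↔
       (∃ p : FPts (↥Z) (JB Z), JPt Z p = q ∧ p.val.2 = 1)) :=
  stmt15_general hXnc S hSne Z hZ
end

section
/- Let (X,ρ) be a compact metric space and A ⊆ X a nonempty closed subset containing all isolated points of X, and let (q_n)_{n≥1} be an enumeration of a countable dense subset of A in which every listed point is repeated infinitely many times. Then the set D_A = {(q_n, 1/n) : n ≥ 1} belongs to D_{X,A}; in particular, D_{X,A} is nonempty. -/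
open Topology

/-!
The heights `1/n` are separated from one another and from `0`, so every point `(q n, 1/n)` is
isolated in `X × {0} ∪ D`. Since `1/n → 0` and finite sets are closed, all new limit points of
`D` lie at height `0`, and over `A` because `A` is closed. Conversely, since each `q n` recurs
for arbitrarily large indices `m`, the points `(q n, 1/m)` approach `(q n, 0)`, and density of
the `q n` in `A` then gives all of `A × {0}`.
-/

open Filter Set

lemma Nat.eq_of_inv_succ_lt_inv_of_pred_mul_inv_lt_one {m n : ℕ}
    (hlo : ((n : ℝ) + 1)⁻¹ < (m : ℝ)⁻¹) (hhi : ((n : ℝ) - 1) * (m : ℝ)⁻¹ < 1) : m = n := by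
  have hm : (0 : ℝ) < m := by
    by_contra! h
    have : (m : ℝ) = 0 := le_antisymm h m.cast_nonneg
    rw [this, inv_zero] at hlo
    exact (inv_pos.2 (by positivity : (0 : ℝ) < n + 1)).not_gt hlo
  have hlt : (m : ℝ) < n + 1 := (inv_lt_inv₀ (by positivity) hm).1 hlo
  have hgt : (n : ℝ) - 1 < m := by rwa [← div_eq_mul_inv, div_lt_one hm] at hhi
  have h1 : m < n + 1 := by exact_mod_cast hlt
  have h2 : n < m + 1 := by exact_mod_cast (by linarith : (n : ℝ) < m + 1)
  omega

lemma closure_image_subset_union_preimage {Y Z : Type*} [TopologicalSpace Y] [T1Space Y]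
    [TopologicalSpace Z] [T2Space Z] {π : Y → Z} (hπ : Continuous π) {g : ℕ → Y} {c : Z}
    (hg : Tendsto (π ∘ g) atTop (𝓝 c)) (s : Set ℕ) :
    closure (g '' s) ⊆ g '' s ∪ π ⁻¹' {c} := by
  intro z hz
  refine or_iff_not_imp_right.2 fun hzc => ?_
  obtain ⟨u, v, hu, hv, hzu, hcv, huv⟩ := t2_separation hzc
  have hfin : {n | π (g n) ∉ v}.Finite := by
    have := hg.eventually (hv.mem_nhds hcv)
    rwa [← Nat.cofinite_eq_atTop, eventually_cofinite] at this
  have hsplit : g '' s ⊆ g '' (s ∩ {n | π (g n) ∉ v}) ∪ π ⁻¹' v := by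
    rintro _ ⟨n, hn, rfl⟩
    by_cases hnv : π (g n) ∈ v
    · exact .inr hnv
    · exact .inl ⟨n, ⟨hn, hnv⟩, rfl⟩
  have hfar : closure (π ⁻¹' v) ⊆ (π ⁻¹' u)ᶜ :=
    closure_minimal (fun y hy hyu => huv.ne_of_mem hyu hy rfl)
      (hu.preimage hπ).isClosed_compl
  have hz' := closure_mono hsplit hz
  rw [closure_union, ((hfin.subset inter_subset_right).image g).isClosed.closure_eq] at hz'
  rcases hz' with hz' | hz'
  · exact image_mono inter_subset_left hz'
  · exact absurd hzu (hfar hz')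

section InvGraph

variable {X : Type*}

def invGraph (q : ℕ → X) : Set (X × ℝ) := {p | ∃ n : ℕ, 1 ≤ n ∧ p = (q n, (n : ℝ)⁻¹)}

lemma invGraph_eq_image (q : ℕ → X) :
    invGraph q = (fun n : ℕ => (q n, (n : ℝ)⁻¹)) '' Ici 1 := by
  ext p
  simp only [invGraph, mem_ofPred_eq, mem_image, mem_Ici, eq_comm]

lemma snd_mem_Ioc_of_mem_invGraph {q : ℕ → X} {p : X × ℝ} (hp : p ∈ invGraph q) :
    p.2 ∈ Ioc (0 : ℝ) 1 := by
  obtain ⟨n, hn, rfl⟩ := hp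
  exact ⟨by positivity, inv_le_one_of_one_le₀ (by exact_mod_cast hn)⟩

lemma nhdsWithin_xzero_union_invGraph_diff_eq_bot [TopologicalSpace X] (q : ℕ → X) {p : X × ℝ}
    (hp : p ∈ invGraph q) : 𝓝[(xzero X ∪ invGraph q) \ {p}] p = ⊥ := by
  obtain ⟨n, hn, rfl⟩ := hp
  have hn' : (1 : ℝ) ≤ n := by exact_mod_cast hn
  -- For `y.2 = 1/m` the two conditions say `n - 1 < m < n + 1`; writing the second one without
  -- `y.2⁻¹` keeps `V` visibly open.
  set V : Set (X × ℝ) := {y | ((n : ℝ) + 1)⁻¹ < y.2 ∧ ((n : ℝ) - 1) * y.2 < 1}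
  have hV : V ∈ 𝓝 (q n, (n : ℝ)⁻¹) := by
    have hVo : IsOpen V := (isOpen_lt continuous_const continuous_snd).inter
      (isOpen_lt (continuous_const.mul continuous_snd) continuous_const)
    refine hVo.mem_nhds ⟨?_, ?_⟩
    · exact inv_strictAnti₀ (by positivity) (by linarith)
    · show ((n : ℝ) - 1) * (n : ℝ)⁻¹ < 1
      rw [sub_mul, mul_inv_cancel₀ (by positivity)]
      linarith [inv_pos.2 (by positivity : (0 : ℝ) < n)]
  rw [nhdsWithin, inf_principal_eq_bot]
  filter_upwards [hV] with y ⟨hlo, hhi⟩ ⟨hy, hyp⟩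
  rcases hy with ⟨-, hy0⟩ | ⟨m, -, rfl⟩
  · rw [mem_singleton_iff.1 hy0] at hlo
    exact (inv_pos.2 (by positivity : (0 : ℝ) < n + 1)).not_gt hlo
  · rw [Nat.eq_of_inv_succ_lt_inv_of_pred_mul_inv_lt_one hlo hhi] at hyp
    exact hyp (mem_singleton _)

lemma mk_zero_mem_closure_invGraph [TopologicalSpace X] {q : ℕ → X}
    (hrep : ∀ n, 1 ≤ n → {m : ℕ | 1 ≤ m ∧ q m = q n}.Infinite) {a : X}
    (ha : a ∈ closure {x : X | ∃ n, 1 ≤ n ∧ q n = x}) : (a, (0 : ℝ)) ∈ closure (invGraph q) := by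
  rw [mem_closure_iff_nhds]
  intro t ht
  rw [nhds_prod_eq, mem_prod_iff] at ht
  obtain ⟨U, hU, V, hV, hUV⟩ := ht
  obtain ⟨_, hxU, n, hn, rfl⟩ := mem_closure_iff_nhds.1 ha U hU
  obtain ⟨N, hN⟩ := eventually_atTop.1 ((tendsto_inv_atTop_nhds_zero_nat (𝕜 := ℝ)).eventually hV)
  obtain ⟨m, ⟨hm, hmn⟩, hNm⟩ := (hrep n hn).exists_gt N
  exact ⟨(q m, (m : ℝ)⁻¹), hUV ⟨hmn ▸ hxU, hN m hNm.le⟩, m, hm, rfl⟩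

lemma closure_invGraph_diff [TopologicalSpace X] [T1Space X] {A : Set X} (hAcl : IsClosed A)
    {q : ℕ → X} (hmem : ∀ n, 1 ≤ n → q n ∈ A)
    (hdense : A ⊆ closure {x : X | ∃ n, 1 ≤ n ∧ q n = x})
    (hrep : ∀ n, 1 ≤ n → {m : ℕ | 1 ≤ m ∧ q m = q n}.Infinite) :
    closure (invGraph q) \ invGraph q = A ×ˢ ({0} : Set ℝ) := by
  ext ⟨x, t⟩
  constructor
  · rintro ⟨hcl, hnot⟩
    have hA : closure (invGraph q) ⊆ A ×ˢ univ :=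
      closure_minimal (by rintro _ ⟨n, hn, rfl⟩; exact ⟨hmem n hn, trivial⟩)
        (hAcl.prod isClosed_univ)
    refine ⟨(hA hcl).1, ?_⟩
    rw [invGraph_eq_image] at hcl hnot
    exact (closure_image_subset_union_preimage continuous_snd
      tendsto_inv_atTop_nhds_zero_nat _ hcl).resolve_left hnot
  · rintro ⟨hx, rfl : t = 0⟩
    refine ⟨mk_zero_mem_closure_invGraph hrep (hdense hx), ?_⟩
    rintro ⟨n, hn, hxn⟩
    exact (inv_pos.2 (by exact_mod_cast hn : (0 : ℝ) < n)).ne' (congrArg Prod.snd hxn).symm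

end InvGraph

theorem stmt18_general {X : Type} [MetricSpace X]
    (A : Set X) (hAcl : IsClosed A)
    (q : ℕ → X)
    (hmem : ∀ n, 1 ≤ n → q n ∈ A)
    (hdense : A ⊆ closure {x : X | ∃ n, 1 ≤ n ∧ q n = x})
    (hrep : ∀ n, 1 ≤ n → {m : ℕ | 1 ≤ m ∧ q m = q n}.Infinite) :
    {p : X × ℝ | ∃ n : ℕ, 1 ≤ n ∧ p = (q n, (n : ℝ)⁻¹)} ∈ Dcoll X A :=
  ⟨⟨_, 1, le_rfl, rfl⟩, fun _ => snd_mem_Ioc_of_mem_invGraph,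
    fun _ => nhdsWithin_xzero_union_invGraph_diff_eq_bot q,
    closure_invGraph_diff hAcl hmem hdense hrep⟩

theorem stmt18 {X : Type} [MetricSpace X] [CompactSpace X]
    (A : Set X) (hAne : A.Nonempty) (hAcl : IsClosed A)
    (hAiso : {x : X | 𝓝[≠] x = ⊥} ⊆ A)
    (q : ℕ → X)
    (hmem : ∀ n, 1 ≤ n → q n ∈ A)
    (hdense : A ⊆ closure {x : X | ∃ n, 1 ≤ n ∧ q n = x})
    (hrep : ∀ n, 1 ≤ n → {m : ℕ | 1 ≤ m ∧ q m = q n}.Infinite) :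
    {p : X × ℝ | ∃ n : ℕ, 1 ≤ n ∧ p = (q n, (n : ℝ)⁻¹)} ∈ Dcoll X A :=
  stmt18_general A hAcl q hmem hdense hrep
end
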